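/- arXiv:2201.01512 — 3 statements merged into one kernel-verified Lean document; each statement's English description precedes it below -/
import Mathlib

section
/- Let J : ℝ → ℝ be nonnegative and integrable with ∫_ℝ J(x) dx = 1, define ψ(t,x) := e^{−t} ∑_{i=1}^∞ (t^i/i!) · J^{*(i)}(x), and let u₀ ∈ L^∞(ℝ) be measurable and bounded. Define u(t,x) := e^{−t} u₀(x) + ∫_ℝ ψ(t,x−y) u₀(y) dy. Then u is a bounded solution of the linear nonlocal heat equation: u(0,x) = u₀(x) for all x, and for every x ∈ ℝ the map t ↦ u(t,x) is differentiable on (0,∞) with ∂_t u(t,x) = (J ∗ u(t,·))(x) − u(t,x) for all t > 0. -/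
open MeasureTheory Filter Set Asymptotics

noncomputable section

/-- `convIter J n` is the (n+1)-fold convolution `J^{*(n+1)}` of `J` with itself:
`convIter J 0 = J` and `convIter J (n+1) = J ∗ convIter J n`. -/
def convIter (J : ℝ → ℝ) : ℕ → ℝ → ℝ
  | 0 => J
  | n + 1 => fun x => ∫ y, J y * convIter J n (x - y)

/-- `tailR J n L = R_{n+1}(L) = ∫_{|x| ≥ L} J^{*(n+1)}(x) dx`, the tail of the
`(n+1)`-fold convolution of `J`. -/
def tailR (J : ℝ → ℝ) (n : ℕ) (L : ℝ) : ℝ :=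
  ∫ x in {x : ℝ | L ≤ |x|}, convIter J n x

/-- The step initial datum `φ(x) = h · 1_{(-L,L)}(x)`. -/
def stepInit (h L : ℝ) : ℝ → ℝ :=
  Set.indicator (Set.Ioo (-L) L) (fun _ => h)

/-- Assumption (K1): `J` is nonnegative, even, integrable, of total mass 1. -/
def K1 (J : ℝ → ℝ) : Prop :=
  (∀ x, 0 ≤ J x) ∧ (∀ x, J (-x) = J x) ∧ Integrable J ∧ (∫ x, J x) = 1

/-- `u` is a bounded solution of `∂ₜ u = ∫ J(y)(u(t,x-y) - u(t,x)) dy + f(u)` for `t > 0`,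
with initial datum `u0`. -/
def IsBddSol (J f : ℝ → ℝ) (u0 : ℝ → ℝ) (u : ℝ → ℝ → ℝ) : Prop :=
  (∃ M, ∀ t x, 0 ≤ t → |u t x| ≤ M) ∧
  (∀ t, 0 ≤ t → Measurable fun x => u t x) ∧
  (∀ x, ContinuousOn (fun t => u t x) (Set.Ici 0)) ∧
  (∀ x, u 0 x = u0 x) ∧
  (∀ t x, 0 < t → HasDerivAt (fun s => u s x)
    ((∫ y, J y * (u t (x - y) - u t x)) + f (u t x)) t)

/-- Extinction at large times: `sup_x u(t,x) → 0` as `t → ∞`. -/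
def Extinct (u : ℝ → ℝ → ℝ) : Prop :=
  Tendsto (fun t => ⨆ x, u t x) atTop (nhds 0)

/-- Propagation: `u(t,x) → 1` as `t → ∞`, locally uniformly in `x`. -/
def Propagates (u : ℝ → ℝ → ℝ) : Prop :=
  TendstoLocallyUniformly (fun t x => u t x) (fun _ => (1 : ℝ)) atTop

/-- Assumption (F): `f` is Lipschitz, vanishes at `0, θ, 1`, positive on `(θ,1)`,
bistable (with positive integral) or ignition, and `f(u) ≥ rm (u - θ)` on `[0, δ]`. -/
def AssumptionF (f : ℝ → ℝ) (θ rm δ : ℝ) : Prop :=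
  (∃ C : ℝ, 0 ≤ C ∧ ∀ u v : ℝ, |f u - f v| ≤ C * |u - v|) ∧
  f 0 = 0 ∧ f θ = 0 ∧ f 1 = 0 ∧
  (∀ u ∈ Set.Ioo θ 1, 0 < f u) ∧
  (((∀ u ∈ Set.Ioo 0 θ, f u < 0) ∧ 0 < ∫ s in (0:ℝ)..1, f s) ∨
    (∀ u ∈ Set.Ioo 0 θ, f u = 0)) ∧
  0 < rm ∧ δ ∈ Set.Ioo θ 1 ∧
  (∀ u ∈ Set.Icc 0 δ, rm * (u - θ) ≤ f u)

/-- Assumption (K3): the Fourier transform of `J` satisfies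
`Ĵ(ξ) = 1 - a |ξ|^β + o(|ξ|^β)` as `ξ → 0`. -/
def K3 (J : ℝ → ℝ) (a β : ℝ) : Prop :=
  (fun ξ : ℝ => (∫ x : ℝ, Complex.exp (-((ξ : ℂ) * (x : ℂ)) * Complex.I) * (J x : ℂ))
      - ((1 - a * |ξ| ^ β : ℝ) : ℂ))
    =o[nhds (0:ℝ)] (fun ξ : ℝ => |ξ| ^ β)

/-- `psiFun J t x = e^{-t} ∑_{i≥1} (tⁱ/i!) J^{*(i)}(x)`. -/
def psiFun (J : ℝ → ℝ) (t x : ℝ) : ℝ :=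
  Real.exp (-t) * ∑' n : ℕ, t ^ (n + 1) / (Nat.factorial (n + 1) : ℝ) * convIter J n x


/-!
Put `v k = J^{*k} ∗ u₀`. Associativity of convolution turns the formula into the Poisson average
`u(t,x) = e^{-t} ∑ₖ tᵏ/k! · v k(x)`. As `J` is a probability density, every `v k` is bounded by
`sup |u₀|`, so this series may be differentiated in `t` and integrated against `J` term by term.
Both operations shift the index `k ↦ k + 1` (the first up to the term `-u` coming from `e^{-t}`),
which is the equation `∂ₜ u = J ∗ u - u`.
-/

open scoped Convolution Nat
open ContinuousLinearMap (mul)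

section BoundedConvolution

variable {E E' F : Type*} [NormedAddCommGroup E] [NormedAddCommGroup E'] [NormedAddCommGroup F]
  [NormedSpace ℝ E] [NormedSpace ℝ E'] [NormedSpace ℝ F]

theorem convolutionExistsAt_of_norm_le (L : E →L[ℝ] E' →L[ℝ] F) {f : ℝ → E} {g : ℝ → E'}
    {M : ℝ} (hf : Integrable f) (hg : AEStronglyMeasurable g) (hgM : ∀ x, ‖g x‖ ≤ M) (x : ℝ) :
    ConvolutionExistsAt f g x L := by
  refine (hf.norm.const_mul (‖L‖ * M)).mono'
    (hf.aestronglyMeasurable.convolution_integrand_snd L hg x) (Eventually.of_forall fun t => ?_)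
  calc ‖L (f t) (g (x - t))‖ ≤ ‖L‖ * ‖f t‖ * ‖g (x - t)‖ := L.le_opNorm₂ _ _
    _ ≤ ‖L‖ * ‖f t‖ * M := by gcongr; exact hgM _
    _ = ‖L‖ * M * ‖f t‖ := by ring

theorem aestronglyMeasurable_convolution (L : E →L[ℝ] E' →L[ℝ] F) {f : ℝ → E} {g : ℝ → E'}
    (hf : AEStronglyMeasurable f) (hg : AEStronglyMeasurable g) :
    AEStronglyMeasurable (f ⋆[L] g) :=
  (hf.convolution_integrand L hg).integral_prod_right'

end BoundedConvolution

section RealConvolution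

variable {f g k : ℝ → ℝ} {M : ℝ}

theorem integral_abs_mul_sub_le (hf : Integrable f) (hgM : ∀ x, |g x| ≤ M) (x : ℝ) :
    ∫ t, |f t * g (x - t)| ≤ (∫ t, |f t|) * M := by
  rw [← integral_mul_const]
  refine integral_mono_of_nonneg (Eventually.of_forall fun t => abs_nonneg _)
    (hf.abs.mul_const M) (Eventually.of_forall fun t => ?_)
  simp only [abs_mul]
  exact mul_le_mul_of_nonneg_left (hgM _) (abs_nonneg _)

theorem abs_convolution_le (hf : Integrable f) (hgM : ∀ x, |g x| ≤ M) (x : ℝ) :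
    |(f ⋆[mul ℝ ℝ] g) x| ≤ (∫ t, |f t|) * M := by
  rw [convolution_mul]
  exact (abs_integral_le_integral_abs).trans (integral_abs_mul_sub_le hf hgM x)

theorem convolution_assoc_of_abs_le (hf : Integrable f) (hg : Integrable g)
    (hk : AEStronglyMeasurable k) (hkM : ∀ x, |k x| ≤ M) (x : ℝ) :
    ((f ⋆[mul ℝ ℝ] g) ⋆[mul ℝ ℝ] k) x = (f ⋆[mul ℝ ℝ] (g ⋆[mul ℝ ℝ] k)) x := by
  have hgk_bound : ∀ z, ‖((fun z => ‖g z‖) ⋆[mul ℝ ℝ] fun z => ‖k z‖) z‖ ≤ (∫ t, |‖g t‖|) * M :=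
    fun z => abs_convolution_le hg.norm (by simpa using hkM) z
  refine convolution_assoc (mul ℝ ℝ) (mul ℝ ℝ) (mul ℝ ℝ) (mul ℝ ℝ)
    (fun a b c => by simp [mul_assoc]) hf.aestronglyMeasurable hg.aestronglyMeasurable hk
    (hf.ae_convolution_exists _ hg)
    (Eventually.of_forall fun y =>
      convolutionExistsAt_of_norm_le _ hg.norm hk.norm (by simpa using hkM) y)
    (convolutionExistsAt_of_norm_le _ hf.norm
      (aestronglyMeasurable_convolution _ hg.norm.aestronglyMeasurable hk.norm) hgk_bound x)

theorem integral_tsum_mul_sub {a : ℕ → ℝ} {p q : ℕ → ℝ → ℝ} {C : ℝ}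
    (ha : Summable fun n => |a n|) (hp : ∀ n, Integrable (p n)) (hpC : ∀ n, ∫ y, |p n y| ≤ C)
    (hq : ∀ n, AEStronglyMeasurable (q n)) (hqM : ∀ n x, |q n x| ≤ M) (x : ℝ) :
    ∫ y, ∑' n, a n * (p n y * q n (x - y)) = ∑' n, a n * ∫ y, p n y * q n (x - y) := by
  have hM : 0 ≤ M := (abs_nonneg _).trans (hqM 0 0)
  have hint : ∀ n, Integrable fun y => a n * (p n y * q n (x - y)) := fun n => by
    simpa using
      (convolutionExistsAt_of_norm_le (mul ℝ ℝ) (hp n) (hq n) (hqM n) x).integrable.const_mul (a n)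
  have hbound : ∀ n, ∫ y, ‖a n * (p n y * q n (x - y))‖ ≤ |a n| * (C * M) := fun n =>
    calc ∫ y, ‖a n * (p n y * q n (x - y))‖ = |a n| * ∫ y, |p n y * q n (x - y)| := by
          rw [← integral_const_mul]; simp only [norm_mul, Real.norm_eq_abs, abs_mul]
      _ ≤ |a n| * (C * M) := by
          gcongr
          exact (integral_abs_mul_sub_le (hp n) (hqM n) x).trans (by gcongr; exact hpC n)
  rw [← integral_tsum_of_summable_integral_norm hint
    (Summable.of_nonneg_of_le (fun n => integral_nonneg fun _ => norm_nonneg _) hbound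
      (ha.mul_right _))]
  exact tsum_congr fun n => integral_const_mul _ _

end RealConvolution

def poissonMean (v : ℕ → ℝ) (t : ℝ) : ℝ :=
  Real.exp (-t) * ∑' k, t ^ k / k ! * v k

section PoissonMean

variable {v : ℕ → ℝ} {M : ℝ}

theorem summable_pow_div_factorial_mul (hv : ∀ k, |v k| ≤ M) (t : ℝ) :
    Summable fun k => t ^ k / k ! * v k :=
  .of_norm_bounded ((Real.summable_pow_div_factorial |t|).mul_right M) fun k => by
    rw [norm_mul, Real.norm_eq_abs, Real.norm_eq_abs, abs_div, abs_pow, Nat.abs_cast]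
    gcongr
    exact hv k

theorem summable_abs_exp_neg_mul_pow_div_factorial (t : ℝ) :
    Summable fun k : ℕ => |Real.exp (-t) * (t ^ k / k !)| := by
  simpa [abs_mul, abs_div, abs_pow] using
    (Real.summable_pow_div_factorial |t|).mul_left (Real.exp (-t))

theorem hasDerivAt_pow_succ_div_factorial (k : ℕ) (s : ℝ) :
    HasDerivAt (fun s : ℝ => s ^ (k + 1) / (k + 1)!) (s ^ k / k !) s := by
  refine ((hasDerivAt_pow (k + 1) s).div_const ((k + 1)! : ℝ)).congr_deriv ?_
  rw [Nat.factorial_succ]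
  push_cast
  field_simp

theorem hasDerivAt_tsum_pow_div_factorial_mul (hv : ∀ k, |v k| ≤ M) (t : ℝ) :
    HasDerivAt (fun s => ∑' k, s ^ k / k ! * v k) (∑' k, t ^ k / k ! * v (k + 1)) t := by
  have hshift : (fun s => ∑' k, s ^ k / k ! * v k)
      = fun s => v 0 + ∑' k, s ^ (k + 1) / (k + 1)! * v (k + 1) := funext fun s => by
    rw [(summable_pow_div_factorial_mul hv s).tsum_eq_zero_add]
    simp
  rw [hshift]
  refine .const_add _ ?_
  set R := |t| + 1
  have ht : t ∈ Ioo (-R) R := abs_lt.mp (by linarith)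
  refine hasDerivAt_tsum_of_isPreconnected ((Real.summable_pow_div_factorial R).mul_right M)
    isOpen_Ioo isPreconnected_Ioo
    (fun k s _ => (hasDerivAt_pow_succ_div_factorial k s).mul_const (v (k + 1)))
    (fun k s hs => ?_) ht ((summable_nat_add_iff 1).mpr (summable_pow_div_factorial_mul hv t)) ht
  rw [norm_mul, Real.norm_eq_abs, Real.norm_eq_abs, abs_div, abs_pow, Nat.abs_cast]
  gcongr
  · exact abs_le.mpr ⟨hs.1.le, hs.2.le⟩
  · exact hv (k + 1)

theorem poissonMean_zero (v : ℕ → ℝ) : poissonMean v 0 = v 0 := by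
  rw [poissonMean, tsum_eq_single 0 fun k hk => by simp [hk]]
  simp

theorem abs_poissonMean_le (hv : ∀ k, |v k| ≤ M) {t : ℝ} (ht : 0 ≤ t) :
    |poissonMean v t| ≤ M := by
  have hexp : HasSum (fun k => t ^ k / k ! * M) (Real.exp t * M) := by
    rw [Real.exp_eq_exp_ℝ]
    exact (NormedSpace.expSeries_div_hasSum_exp t).mul_right M
  calc |poissonMean v t| = Real.exp (-t) * ‖∑' k, t ^ k / k ! * v k‖ := by
        rw [poissonMean, abs_mul, abs_of_pos (Real.exp_pos _), Real.norm_eq_abs]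
    _ ≤ Real.exp (-t) * (Real.exp t * M) := by
        gcongr
        refine tsum_of_norm_bounded hexp fun k => ?_
        rw [norm_mul, Real.norm_eq_abs, Real.norm_eq_abs, abs_div, abs_pow, Nat.abs_cast,
          abs_of_nonneg ht]
        gcongr
        exact hv k
    _ = M := by rw [← mul_assoc, ← Real.exp_add, neg_add_cancel, Real.exp_zero, one_mul]

theorem hasDerivAt_poissonMean (hv : ∀ k, |v k| ≤ M) (t : ℝ) :
    HasDerivAt (poissonMean v) (poissonMean (fun k => v (k + 1)) t - poissonMean v t) t := by
  have hexp : HasDerivAt (fun s => Real.exp (-s)) (-Real.exp (-t)) t := by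
    simpa using (hasDerivAt_neg t).exp
  refine (hexp.mul (hasDerivAt_tsum_pow_div_factorial_mul hv t)).congr_deriv ?_
  rw [poissonMean, poissonMean]
  ring

end PoissonMean

section IterateConvolution

variable {f g h : ℝ → ℝ} {M : ℝ}

theorem MeasureTheory.Integrable.iterate_convolution (hf : Integrable f) (hg : Integrable g)
    (n : ℕ) : Integrable ((f ⋆[mul ℝ ℝ] ·)^[n] g) := by
  induction n with
  | zero => exact hg
  | succ n ih =>
    rw [Function.iterate_succ_apply']
    exact hf.integrable_convolution (mul ℝ ℝ) ih

theorem MeasureTheory.AEStronglyMeasurable.iterate_convolution (hf : AEStronglyMeasurable f)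
    (hg : AEStronglyMeasurable g) (n : ℕ) : AEStronglyMeasurable ((f ⋆[mul ℝ ℝ] ·)^[n] g) := by
  induction n with
  | zero => exact hg
  | succ n ih =>
    rw [Function.iterate_succ_apply']
    exact aestronglyMeasurable_convolution (mul ℝ ℝ) hf ih

theorem abs_iterate_convolution_le (hf : Integrable f) (hgM : ∀ x, |g x| ≤ M) (n : ℕ) (x : ℝ) :
    |(f ⋆[mul ℝ ℝ] ·)^[n] g x| ≤ (∫ t, |f t|) ^ n * M := by
  induction n generalizing x with
  | zero => simpa using hgM x
  | succ n ih =>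
    rw [Function.iterate_succ_apply', pow_succ', mul_assoc]
    exact abs_convolution_le hf ih x

theorem iterate_convolution_assoc (hf : Integrable f) (hg : Integrable g)
    (hh : AEStronglyMeasurable h) (hhM : ∀ x, |h x| ≤ M) (n : ℕ) :
    ((f ⋆[mul ℝ ℝ] ·)^[n] g) ⋆[mul ℝ ℝ] h = (f ⋆[mul ℝ ℝ] ·)^[n] (g ⋆[mul ℝ ℝ] h) := by
  induction n with
  | zero => rfl
  | succ n ih =>
    rw [Function.iterate_succ_apply', Function.iterate_succ_apply', ← ih]
    funext x
    exact convolution_assoc_of_abs_le hf (hf.iterate_convolution hg n) hh hhM x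

end IterateConvolution

section ConvIter

variable {J : ℝ → ℝ}

theorem convIter_eq_iterate (J : ℝ → ℝ) (n : ℕ) : convIter J n = (J ⋆[mul ℝ ℝ] ·)^[n] J := by
  induction n with
  | zero => rfl
  | succ n ih =>
    rw [Function.iterate_succ_apply', ← ih]
    funext x
    rw [convolution_mul]
    rfl

theorem integrable_convIter (hJ : Integrable J) (n : ℕ) : Integrable (convIter J n) :=
  convIter_eq_iterate J n ▸ hJ.iterate_convolution hJ n

theorem convIter_nonneg (hJ : ∀ x, 0 ≤ J x) (n : ℕ) (x : ℝ) : 0 ≤ convIter J n x := by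
  induction n generalizing x with
  | zero => exact hJ x
  | succ n ih => exact integral_nonneg fun y => mul_nonneg (hJ y) (ih _)

theorem integral_convIter (hJint : Integrable J) (hJmass : ∫ x, J x = 1) (n : ℕ) :
    ∫ x, convIter J n x = 1 := by
  induction n with
  | zero => exact hJmass
  | succ n ih =>
    rw [convIter_eq_iterate, Function.iterate_succ_apply', ← convIter_eq_iterate,
      integral_convolution (mul ℝ ℝ) hJint (integrable_convIter hJint n), hJmass, ih]
    simp

theorem integral_abs_convIter (hJpos : ∀ x, 0 ≤ J x) (hJint : Integrable J)
    (hJmass : ∫ x, J x = 1) (n : ℕ) : ∫ x, |convIter J n x| = 1 := by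
  simp_rw [abs_of_nonneg (convIter_nonneg hJpos n _)]
  exact integral_convIter hJint hJmass n

theorem convIter_convolution {u0 : ℝ → ℝ} {M : ℝ} (hJ : Integrable J)
    (hu0 : AEStronglyMeasurable u0) (hu0M : ∀ x, |u0 x| ≤ M) (n : ℕ) :
    convIter J n ⋆[mul ℝ ℝ] u0 = (J ⋆[mul ℝ ℝ] ·)^[n + 1] u0 := by
  rw [convIter_eq_iterate, iterate_convolution_assoc hJ hJ hu0 hu0M, Function.iterate_succ_apply]

theorem abs_iterate_convolution_le_of_nonneg_of_integral_eq_one {g : ℝ → ℝ} {M : ℝ}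
    (hJpos : ∀ x, 0 ≤ J x) (hJint : Integrable J) (hJmass : ∫ x, J x = 1)
    (hgM : ∀ x, |g x| ≤ M) (n : ℕ) (x : ℝ) : |(J ⋆[mul ℝ ℝ] ·)^[n] g x| ≤ M := by
  have hJ1 : ∫ x, |J x| = 1 := integral_abs_convIter hJpos hJint hJmass 0
  simpa [hJ1] using abs_iterate_convolution_le hJint hgM n x

end ConvIter

theorem integral_mul_poissonMean {p : ℝ → ℝ} {q : ℕ → ℝ → ℝ} {M : ℝ} (hp : Integrable p)
    (hq : ∀ k, AEStronglyMeasurable (q k)) (hqM : ∀ k x, |q k x| ≤ M) (t x : ℝ) :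
    ∫ y, p y * poissonMean (fun k => q k (x - y)) t
      = poissonMean (fun k => ∫ y, p y * q k (x - y)) t :=
  calc ∫ y, p y * poissonMean (fun k => q k (x - y)) t
      = ∫ y, ∑' k, Real.exp (-t) * (t ^ k / k !) * (p y * q k (x - y)) := by
        refine integral_congr_ae (Eventually.of_forall fun y => ?_)
        simp only [poissonMean, ← tsum_mul_left]
        exact tsum_congr fun k => by ring
    _ = ∑' k, Real.exp (-t) * (t ^ k / k !) * ∫ y, p y * q k (x - y) :=
        integral_tsum_mul_sub (summable_abs_exp_neg_mul_pow_div_factorial t) (fun _ => hp)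
          (fun _ => le_rfl) hq hqM x
    _ = poissonMean (fun k => ∫ y, p y * q k (x - y)) t := by
        simp only [poissonMean, ← tsum_mul_left]
        exact tsum_congr fun k => by ring

theorem add_integral_psiFun_mul_eq_poissonMean {J u0 : ℝ → ℝ} {M : ℝ} (hJpos : ∀ x, 0 ≤ J x)
    (hJint : Integrable J) (hJmass : ∫ x, J x = 1) (hu0 : AEStronglyMeasurable u0)
    (hu0M : ∀ x, |u0 x| ≤ M) (t x : ℝ) :
    Real.exp (-t) * u0 x + ∫ y, psiFun J t (x - y) * u0 y
      = poissonMean (fun k => (J ⋆[mul ℝ ℝ] ·)^[k] u0 x) t := by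
  have hv : ∀ k, |(J ⋆[mul ℝ ℝ] ·)^[k] u0 x| ≤ M :=
    (abs_iterate_convolution_le_of_nonneg_of_integral_eq_one hJpos hJint hJmass hu0M · x)
  have hweights : Summable fun n : ℕ => |Real.exp (-t) * (t ^ (n + 1) / (n + 1)!)| :=
    (summable_nat_add_iff 1).mpr (summable_abs_exp_neg_mul_pow_div_factorial t)
  have hpsi : ∫ y, psiFun J t (x - y) * u0 y
      = ∑' n : ℕ, Real.exp (-t) * (t ^ (n + 1) / (n + 1)!) * (J ⋆[mul ℝ ℝ] ·)^[n + 1] u0 x :=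
    calc ∫ y, psiFun J t (x - y) * u0 y = ∫ y, psiFun J t y * u0 (x - y) := by
          simpa using integral_sub_left_eq_self (fun y => psiFun J t y * u0 (x - y)) volume x
      _ = ∫ y, ∑' n : ℕ,
            Real.exp (-t) * (t ^ (n + 1) / (n + 1)!) * (convIter J n y * u0 (x - y)) := by
          refine integral_congr_ae (Eventually.of_forall fun y => ?_)
          simp only [psiFun, ← tsum_mul_left, ← tsum_mul_right]
          exact tsum_congr fun n => by ring
      _ = ∑' n : ℕ,
            Real.exp (-t) * (t ^ (n + 1) / (n + 1)!) * ∫ y, convIter J n y * u0 (x - y) :=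
          integral_tsum_mul_sub hweights (integrable_convIter hJint)
            (fun n => (integral_abs_convIter hJpos hJint hJmass n).le) (fun _ => hu0)
            (fun _ => hu0M) x
      _ = _ := by simp_rw [← convolution_mul, convIter_convolution hJint hu0 hu0M]
  rw [hpsi, poissonMean, (summable_pow_div_factorial_mul hv t).tsum_eq_zero_add, mul_add,
    ← tsum_mul_left]
  simp only [pow_zero, Nat.factorial_zero, Nat.cast_one, div_one, one_mul,
    Function.iterate_zero_apply]
  exact congrArg _ (tsum_congr fun n => by ring)

/-- For `J` nonnegative, integrable of mass 1, and `u₀` measurable and bounded, the function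
`u(t,x) = e^{-t} u₀(x) + ∫ ψ(t,x-y) u₀(y) dy` is a bounded solution of the linear nonlocal heat
equation: `u(0,·) = u₀`, `u` is bounded on `[0,∞) × ℝ`, and for every `x` the map `t ↦ u(t,x)`
is differentiable on `(0,∞)` with `∂ₜ u(t,x) = (J ∗ u(t,·))(x) - u(t,x)`. -/
theorem linear_solution_formula
    (J u0 : ℝ → ℝ) (u : ℝ → ℝ → ℝ)
    (hJpos : ∀ x, 0 ≤ J x) (hJint : Integrable J) (hJmass : (∫ x, J x) = 1)
    (hu0m : Measurable u0) (hu0b : ∃ M, ∀ x, |u0 x| ≤ M)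
    (hu : u = fun t x => Real.exp (-t) * u0 x + ∫ y, psiFun J t (x - y) * u0 y) :
    (∀ x, u 0 x = u0 x) ∧
    (∃ M, ∀ t x, 0 ≤ t → |u t x| ≤ M) ∧
    (∀ x, ∀ t, 0 < t → HasDerivAt (fun s => u s x)
      ((∫ y, J y * u t (x - y)) - u t x) t) := by
  obtain ⟨M, hu0M⟩ := hu0b
  set v : ℕ → ℝ → ℝ := fun k => (J ⋆[mul ℝ ℝ] ·)^[k] u0 with hv
  have hvM : ∀ k x, |v k x| ≤ M :=
    abs_iterate_convolution_le_of_nonneg_of_integral_eq_one hJpos hJint hJmass hu0M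
  have hvm : ∀ k, AEStronglyMeasurable (v k) := fun k =>
    hJint.aestronglyMeasurable.iterate_convolution hu0m.aestronglyMeasurable k
  have hu_eq : ∀ t x, u t x = poissonMean (fun k => v k x) t := fun t x => by
    rw [hu]
    exact add_integral_psiFun_mul_eq_poissonMean hJpos hJint hJmass hu0m.aestronglyMeasurable
      hu0M t x
  refine ⟨fun x => ?_, ⟨M, fun t x ht => ?_⟩, fun x t _ => ?_⟩
  · rw [hu_eq, poissonMean_zero]
    rfl
  · rw [hu_eq]
    exact abs_poissonMean_le (fun k => hvM k x) ht
  · have hJu : ∫ y, J y * u t (x - y) = poissonMean (fun k => v (k + 1) x) t := by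
      simp_rw [hu_eq, integral_mul_poissonMean hJint hvm hvM, ← convolution_mul, hv,
        Function.iterate_succ_apply']
    rw [hJu, hu_eq t x, show (fun s => u s x) = poissonMean (fun k => v k x) from
      funext (hu_eq · x)]
    exact hasDerivAt_poissonMean (fun k => hvM k x) t
end
end

section
/- Let J satisfy (K1) and (K2), fix r⁺ > 0 and θ ∈ (0,1), and assume J is exponentially bounded: there exists λ₀ > 0 with ∫_ℝ e^{λ₀ x} J(x) dx < ∞. Then there exist constants C⁻ > 0 and C̃⁻ > 0 (depending only on r⁺ and J) and ε₀ > 0 such that for each ε ∈ (0, ε₀) and each L with 0 < L < C⁻·ln(1/ε), the solution w of the semilinear toy problem ∂_t w = J ∗ w − w + r⁺·max(w − θ, 0) with initial datum w(0,x) = (θ+ε)·1_{(−L,L)}(x) satisfies sup_{x∈ℝ} w(T,x) ≤ θ at the time T = C̃⁻·ln(1/ε). -/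
open MeasureTheory Filter Set Asymptotics

noncomputable section

/-!
Let `μ` be the probability measure with density `J`. The solution `S` of the linear problem
`∂ₜ S = μ ∗ S - S`, `S(0) = 1_{(-L,L)}`, is the exponential series `e^{-t} ∑ tⁿ/n! μ^{∗n} ∗ S(0)`,
and `(θ + ε e^{r⁺ t}) S(t)` is a supersolution of the toy problem lying above `w` at `t = 0`; by
the comparison principle it stays above `w`. Since `J` is even, `μ` charges some `[s, ∞)` and every
point loses the mass `μ[s, ∞)^k` after `k ≈ L / s` jumps. For `L ≲ ln(1/ε)` and `T ≈ ln(1/ε)`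
this gives `S(T) ≤ 1 - e^{-T}`, which pushes the supersolution below `θ` at time `T`.
-/

open scoped Nat

def egf (c : ℕ → ℝ) (t : ℝ) : ℝ := ∑' n, c n * t ^ n / n !

section egf

variable {c : ℕ → ℝ} {C : ℝ}

theorem abs_mul_pow_div_factorial_le {a t R : ℝ} (ha : |a| ≤ C) (ht : |t| ≤ R) (n : ℕ) :
    |a * t ^ n / n !| ≤ C * (R ^ n / n !) := by
  rw [abs_div, abs_mul, abs_pow, Nat.abs_cast, mul_div_assoc]
  exact mul_le_mul ha (by gcongr) (by positivity) ((abs_nonneg _).trans ha)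

theorem summable_egf (hc : ∀ n, |c n| ≤ C) (t : ℝ) :
    Summable fun n => c n * t ^ n / n ! :=
  .of_norm_bounded ((Real.summable_pow_div_factorial |t|).mul_left C) fun n =>
    abs_mul_pow_div_factorial_le (hc n) le_rfl n

theorem egf_zero_right (c : ℕ → ℝ) : egf c 0 = c 0 := by
  rw [egf, tsum_eq_single 0 fun n hn => by simp [hn]]
  simp

theorem hasDerivAt_egf (hc : ∀ n, |c n| ≤ C) (t : ℝ) :
    HasDerivAt (egf c) (egf (fun n => c (n + 1)) t) t := by
  set R := |t| + 1
  have hterm : ∀ n τ, HasDerivAt (fun τ => c (n + 1) * τ ^ (n + 1) / ((n + 1)! : ℝ))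
      (c (n + 1) * τ ^ n / (n ! : ℝ)) τ := by
    intro n τ
    refine (((hasDerivAt_pow (n + 1) τ).const_mul (c (n + 1))).div_const _).congr_deriv ?_
    rw [Nat.factorial_succ]
    push_cast
    field_simp
  have hbound : ∀ n, ∀ τ ∈ Metric.ball (0 : ℝ) R,
      ‖c (n + 1) * τ ^ n / (n ! : ℝ)‖ ≤ C * (R ^ n / (n ! : ℝ)) := by
    intro n τ hτ
    rw [mem_ball_zero_iff, Real.norm_eq_abs] at hτ
    exact abs_mul_pow_div_factorial_le (hc _) (by simp [R]; linarith) n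
  have htail := hasDerivAt_tsum_of_isPreconnected
    ((Real.summable_pow_div_factorial R).mul_left C) Metric.isOpen_ball
    (convex_ball _ _).isPreconnected (fun n τ _ => hterm n τ) hbound
    (Metric.mem_ball_self (by positivity)) (by simp) (y := t) (by simp [R])
  have hsplit : egf c = fun τ => c 0 + ∑' n, c (n + 1) * τ ^ (n + 1) / ((n + 1)! : ℝ) := by
    ext τ
    rw [egf, (summable_egf hc τ).tsum_eq_zero_add]
    simp
  rw [hsplit]
  exact htail.const_add _

theorem egf_nonneg (hc : ∀ n, 0 ≤ c n) {t : ℝ} (ht : 0 ≤ t) : 0 ≤ egf c t :=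
  tsum_nonneg fun n => by have := hc n; positivity

theorem egf_le_exp_sub (hc₀ : ∀ n, 0 ≤ c n) (hc₁ : ∀ n, c n ≤ 1) {k : ℕ} {δ : ℝ}
    (hk : c k ≤ 1 - δ) {t : ℝ} (ht : 0 ≤ t) : egf c t ≤ Real.exp t - δ * t ^ k / k ! := by
  have hc : ∀ n, |c n| ≤ 1 := fun n => abs_le.mpr ⟨by linarith [hc₀ n], hc₁ n⟩
  have hgap : Summable fun n => (1 - c n) * t ^ n / n ! := by
    simpa [sub_mul, sub_div] using (Real.summable_pow_div_factorial t).sub (summable_egf hc t)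
  have hexp : Real.exp t - egf c t = ∑' n, (1 - c n) * t ^ n / n ! := by
    rw [Real.exp_eq_exp_ℝ, NormedSpace.exp_eq_tsum_div, egf,
      ← (Real.summable_pow_div_factorial t).tsum_sub (summable_egf hc t)]
    congr 1; ext n; ring
  have hle : (1 - c k) * t ^ k / k ! ≤ ∑' n, (1 - c n) * t ^ n / n ! :=
    hgap.le_tsum k fun n _ => by have := hc₁ n; positivity
  have hδ : δ * t ^ k / k ! ≤ (1 - c k) * t ^ k / k ! := by gcongr; linarith
  linarith

theorem measurable_egf {α : Type*} [MeasurableSpace α] {f : ℕ → α → ℝ}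
    (hf : ∀ n, Measurable (f n)) (hC : ∀ n x, |f n x| ≤ C) (t : ℝ) :
    Measurable fun x => egf (fun n => f n x) t := by
  refine measurable_of_tendsto_metrizable
    (f := fun N x => ∑ n ∈ Finset.range N, f n x * t ^ n / n !)
    (fun N => Finset.measurable_sum _ fun n _ => ((hf n).mul_const _).div_const _) ?_
  exact tendsto_pi_nhds.mpr fun x => (summable_egf (hC · x) t).hasSum.tendsto_sum_nat

theorem integral_egf {α : Type*} [MeasurableSpace α] {μ : Measure α} [IsFiniteMeasure μ]
    {f : ℕ → α → ℝ} (hf : ∀ n, Measurable (f n)) (hC : ∀ n x, |f n x| ≤ C) (t : ℝ) :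
    ∫ x, egf (fun n => f n x) t ∂μ = egf (fun n => ∫ x, f n x ∂μ) t := by
  have hbound := fun n x => abs_mul_pow_div_factorial_le (hC n x) (le_refl |t|) n
  have hint : ∀ n, Integrable (fun x => f n x * t ^ n / n !) μ := fun n =>
    .of_bound ((hf n).mul_const _ |>.div_const _).aestronglyMeasurable _
      (ae_of_all _ (hbound n))
  have hnorm : Summable fun n => ∫ x, ‖f n x * t ^ n / (n ! : ℝ)‖ ∂μ := by
    refine .of_nonneg_of_le (fun n => integral_nonneg fun _ => norm_nonneg _) (fun n => ?_)
      (((Real.summable_pow_div_factorial |t|).mul_left C).mul_left (μ.real univ))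
    exact (integral_mono (hint n).norm (integrable_const _) (hbound n)).trans_eq (by simp)
  simp only [egf]
  rw [← integral_tsum_of_summable_integral_norm hint hnorm]
  congr 1; ext n
  rw [integral_div, integral_mul_const]

end egf

/-- `μ ∗ f`; for `μ = kernelMeasure J` this is the paper's `J ∗ f`. -/
def measureConv (μ : Measure ℝ) (f : ℝ → ℝ) (x : ℝ) : ℝ := ∫ y, f (x - y) ∂μ

section measureConv

variable {μ : Measure ℝ} {f g : ℝ → ℝ}

theorem measurable_measureConv [SFinite μ] (hf : Measurable f) : Measurable (measureConv μ f) :=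
  (hf.comp (measurable_fst.sub measurable_snd)).stronglyMeasurable.integral_prod_right'.measurable

theorem integrable_comp_sub [IsFiniteMeasure μ] {B : ℝ} (hf : Measurable f)
    (hB : ∀ x, |f x| ≤ B) (x : ℝ) : Integrable (fun y => f (x - y)) μ :=
  .of_bound (hf.comp (measurable_const.sub measurable_id)).aestronglyMeasurable B
    (ae_of_all _ fun y => hB (x - y))

theorem measureConv_mem_Icc [IsProbabilityMeasure μ] {a b : ℝ} (hf : Measurable f)
    (hab : ∀ x, f x ∈ Icc a b) (x : ℝ) : measureConv μ f x ∈ Icc a b := by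
  have hint : Integrable (fun y => f (x - y)) μ :=
    integrable_comp_sub (B := max |a| |b|) hf (fun x => abs_le_max_abs_abs (hab x).1 (hab x).2) x
  constructor
  · simpa [measureConv] using integral_mono (integrable_const a) hint fun y => (hab (x - y)).1
  · simpa [measureConv] using integral_mono hint (integrable_const b) fun y => (hab (x - y)).2

theorem measureConv_sub (x : ℝ) (hf : Integrable (fun y => f (x - y)) μ)
    (hg : Integrable (fun y => g (x - y)) μ) :
    measureConv μ (f - g) x = measureConv μ f x - measureConv μ g x :=
  integral_sub hf hg

theorem measureConv_const_mul (a : ℝ) (x : ℝ) :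
    measureConv μ (fun z => a * f z) x = a * measureConv μ f x :=
  integral_const_mul a _

theorem measureConv_neg [μ.IsNegInvariant] (hf : ∀ x, f (-x) = f x) (x : ℝ) :
    measureConv μ f (-x) = measureConv μ f x := by
  rw [measureConv, measureConv, ← integral_neg_eq_self]
  simp_rw [← hf (x - _)]
  ring_nf

theorem measureConv_le_one_sub_mul [IsProbabilityMeasure μ] (hf : Measurable f)
    (hf₀₁ : ∀ x, f x ∈ Icc 0 1) {a q s : ℝ} (hfa : ∀ x ≤ a, f x ≤ 1 - q) {x : ℝ}
    (hx : x ≤ a + s) : measureConv μ f x ≤ 1 - q * μ.real (Ici s) := by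
  have hpt : ∀ y, f (x - y) ≤ 1 - q * (Ici s).indicator 1 y := by
    intro y
    by_cases hy : s ≤ y
    · simpa [hy] using hfa _ (by linarith)
    · simpa [hy] using (hf₀₁ _).2
  have hind : Integrable (fun y => q * (Ici s).indicator 1 y) μ :=
    ((integrable_const (1 : ℝ)).indicator measurableSet_Ici).const_mul q
  calc measureConv μ f x ≤ ∫ y, (1 - q * (Ici s).indicator 1 y) ∂μ :=
        integral_mono (integrable_comp_sub (B := 1) hf
          (fun x => abs_le.mpr ⟨by linarith [(hf₀₁ x).1], (hf₀₁ x).2⟩) x)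
          ((integrable_const 1).sub hind) hpt
    _ = 1 - q * μ.real (Ici s) := by
        rw [integral_sub (integrable_const 1) hind, integral_const_mul,
          integral_indicator_one measurableSet_Ici]
        simp

end measureConv

section jumpSemigroup

variable {μ : Measure ℝ} {u₀ : ℝ → ℝ}

theorem measurable_iterate_measureConv [SFinite μ] (hu₀ : Measurable u₀) (n : ℕ) :
    Measurable ((measureConv μ)^[n] u₀) := by
  induction n with
  | zero => exact hu₀
  | succ n ih => rw [Function.iterate_succ_apply']; exact measurable_measureConv ih

theorem iterate_measureConv_mem_Icc [IsProbabilityMeasure μ] (hu₀ : Measurable u₀)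
    (hu₀₁ : ∀ x, u₀ x ∈ Icc 0 1) (n : ℕ) (x : ℝ) : (measureConv μ)^[n] u₀ x ∈ Icc 0 1 := by
  induction n generalizing x with
  | zero => exact hu₀₁ x
  | succ n ih =>
    rw [Function.iterate_succ_apply']
    exact measureConv_mem_Icc (measurable_iterate_measureConv hu₀ n) ih x

theorem iterate_measureConv_neg [μ.IsNegInvariant] (hu₀ : ∀ x, u₀ (-x) = u₀ x) (n : ℕ)
    (x : ℝ) : (measureConv μ)^[n] u₀ (-x) = (measureConv μ)^[n] u₀ x := by
  induction n generalizing x with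
  | zero => exact hu₀ x
  | succ n ih => rw [Function.iterate_succ_apply']; exact measureConv_neg ih x

theorem iterate_measureConv_le_one_sub_pow [IsProbabilityMeasure μ] (hu₀ : Measurable u₀)
    (hu₀₁ : ∀ x, u₀ x ∈ Icc 0 1) {a s : ℝ} (hu₀a : ∀ x ≤ a, u₀ x ≤ 0) (n : ℕ) {x : ℝ}
    (hx : x ≤ a + n * s) :
    (measureConv μ)^[n] u₀ x ≤ 1 - μ.real (Ici s) ^ n := by
  induction n generalizing x with
  | zero => simpa using hu₀a x (by simpa using hx)
  | succ n ih =>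
    rw [Function.iterate_succ_apply', pow_succ]
    exact measureConv_le_one_sub_mul (measurable_iterate_measureConv hu₀ n)
      (iterate_measureConv_mem_Icc hu₀ hu₀₁ n) (fun y hy => ih hy) (by push_cast at hx; linarith)

/-- `e^{t (μ ∗ · - id)} u₀`, the semigroup of the compound Poisson process with jumps `∼ μ`. -/
def jumpSemigroup (μ : Measure ℝ) (u₀ : ℝ → ℝ) (t x : ℝ) : ℝ :=
  Real.exp (-t) * egf (fun n => (measureConv μ)^[n] u₀ x) t

theorem jumpSemigroup_zero (x : ℝ) : jumpSemigroup μ u₀ 0 x = u₀ x := by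
  simp [jumpSemigroup, egf_zero_right]

variable [IsProbabilityMeasure μ]

theorem abs_iterate_measureConv_le (hu₀ : Measurable u₀) (hu₀₁ : ∀ x, u₀ x ∈ Icc 0 1)
    (n : ℕ) (x : ℝ) : |(measureConv μ)^[n] u₀ x| ≤ 1 :=
  abs_le.mpr ⟨by linarith [(iterate_measureConv_mem_Icc (μ := μ) hu₀ hu₀₁ n x).1],
    (iterate_measureConv_mem_Icc hu₀ hu₀₁ n x).2⟩

theorem jumpSemigroup_mem_Icc (hu₀ : Measurable u₀) (hu₀₁ : ∀ x, u₀ x ∈ Icc 0 1) {t : ℝ}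
    (ht : 0 ≤ t) (x : ℝ) : jumpSemigroup μ u₀ t x ∈ Icc 0 1 := by
  have h₀₁ := fun n => iterate_measureConv_mem_Icc (μ := μ) hu₀ hu₀₁ n x
  have hle := egf_le_exp_sub (fun n => (h₀₁ n).1) (fun n => (h₀₁ n).2) (k := 0) (δ := 0)
    (by simpa using (h₀₁ 0).2) ht
  refine ⟨mul_nonneg (Real.exp_pos _).le (egf_nonneg (fun n => (h₀₁ n).1) ht), ?_⟩
  calc jumpSemigroup μ u₀ t x ≤ Real.exp (-t) * Real.exp t :=
        mul_le_mul_of_nonneg_left (by simpa using hle) (Real.exp_pos _).le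
    _ = 1 := by rw [← Real.exp_add, neg_add_cancel, Real.exp_zero]

theorem measurable_jumpSemigroup (hu₀ : Measurable u₀) (hu₀₁ : ∀ x, u₀ x ∈ Icc 0 1) (t : ℝ) :
    Measurable (jumpSemigroup μ u₀ t) :=
  (measurable_egf (measurable_iterate_measureConv hu₀) (abs_iterate_measureConv_le hu₀ hu₀₁) t
    ).const_mul _

theorem measureConv_jumpSemigroup (hu₀ : Measurable u₀) (hu₀₁ : ∀ x, u₀ x ∈ Icc 0 1)
    (t x : ℝ) : measureConv μ (jumpSemigroup μ u₀ t) x =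
      Real.exp (-t) * egf (fun n => (measureConv μ)^[n + 1] u₀ x) t := by
  unfold jumpSemigroup
  rw [measureConv_const_mul]
  congr 1
  simp_rw [Function.iterate_succ_apply']
  exact integral_egf (f := fun n y => (measureConv μ)^[n] u₀ (x - y))
    (fun n => (measurable_iterate_measureConv hu₀ n).comp (measurable_const.sub measurable_id))
    (fun n y => abs_iterate_measureConv_le hu₀ hu₀₁ n (x - y)) t

theorem hasDerivAt_jumpSemigroup (hu₀ : Measurable u₀) (hu₀₁ : ∀ x, u₀ x ∈ Icc 0 1)
    (t x : ℝ) : HasDerivAt (fun t => jumpSemigroup μ u₀ t x)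
      (measureConv μ (jumpSemigroup μ u₀ t) x - jumpSemigroup μ u₀ t x) t := by
  refine ((hasDerivAt_neg t).exp.mul
    (hasDerivAt_egf (abs_iterate_measureConv_le hu₀ hu₀₁ · x) t)).congr_deriv ?_
  rw [measureConv_jumpSemigroup hu₀ hu₀₁, jumpSemigroup]
  ring

/-- After `k = ⌈L / s⌉` jumps every point has lost the mass `μ [s, ∞) ^ k`, and the Poisson
weight `e^{-T} T^k / k!` of `k` jumps times that mass is at least `e^{-T}` once `k ≤ μ [s, ∞) T`. -/
theorem jumpSemigroup_le_one_sub_exp_neg [μ.IsNegInvariant] (hu₀ : Measurable u₀)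
    (hu₀₁ : ∀ x, u₀ x ∈ Icc 0 1) (hu₀_even : ∀ x, u₀ (-x) = u₀ x) {L s T : ℝ} (hL : 0 ≤ L)
    (hs : 0 < s) (hu₀L : ∀ x ≤ -L, u₀ x ≤ 0) (hLT : L + s ≤ μ.real (Ici s) * s * T) (x : ℝ) :
    jumpSemigroup μ u₀ T x ≤ 1 - Real.exp (-T) := by
  set p := μ.real (Ici s)
  have hp : 0 ≤ p := measureReal_nonneg
  have hT : 0 ≤ T := by
    by_contra! hT
    nlinarith [mul_nonneg hp hs.le]
  set k := ⌈L / s⌉₊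
  have hkL : L ≤ k * s := (div_le_iff₀ hs).mp (Nat.le_ceil _)
  have hkT : (k : ℝ) ≤ p * T := by
    have hk := Nat.ceil_lt_add_one (div_nonneg hL hs.le)
    have : L / s + 1 ≤ p * T := by
      rw [div_add_one hs.ne', div_le_iff₀ hs]; linarith
    linarith
  have hk : (measureConv μ)^[k] u₀ x ≤ 1 - p ^ k := by
    wlog hx : x ≤ 0 generalizing x
    · rw [← neg_neg x, iterate_measureConv_neg hu₀_even]
      exact this (-x) (by linarith)
    exact iterate_measureConv_le_one_sub_pow hu₀ hu₀₁ hu₀L k (by linarith)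
  have hfac : 1 ≤ p ^ k * T ^ k / k ! := by
    rw [one_le_div (by positivity), ← mul_pow]
    calc (k ! : ℝ) ≤ (k : ℝ) ^ k := by exact_mod_cast Nat.factorial_le_pow k
      _ ≤ (p * T) ^ k := by gcongr
  have h₀₁ := fun n => iterate_measureConv_mem_Icc (μ := μ) hu₀ hu₀₁ n x
  have hegf := egf_le_exp_sub (fun n => (h₀₁ n).1) (fun n => (h₀₁ n).2) hk hT
  calc jumpSemigroup μ u₀ T x ≤ Real.exp (-T) * (Real.exp T - 1) :=
        mul_le_mul_of_nonneg_left (by linarith) (Real.exp_pos _).le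
    _ = 1 - Real.exp (-T) := by rw [mul_sub, ← Real.exp_add, neg_add_cancel, Real.exp_zero, mul_one]

end jumpSemigroup

theorem nonneg_of_hasDerivAt_add_self_nonneg {f f' : ℝ → ℝ} {a b : ℝ} (hab : a ≤ b)
    (hf : ContinuousOn f (Icc a b)) (hf' : ∀ τ ∈ Ioo a b, HasDerivAt f (f' τ) τ)
    (hpos : ∀ τ ∈ Ioo a b, 0 ≤ f' τ + f τ) (ha : 0 ≤ f a) : 0 ≤ f b := by
  have hmono : MonotoneOn (fun τ => Real.exp τ * f τ) (Icc a b) := by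
    refine monotoneOn_of_hasDerivWithinAt_nonneg (convex_Icc a b)
      (Real.continuous_exp.continuousOn.mul hf) (fun τ hτ => ?_) (fun τ hτ => ?_)
      (f' := fun τ => Real.exp τ * (f' τ + f τ))
    · rw [interior_Icc] at hτ
      exact (((Real.hasDerivAt_exp τ).mul (hf' τ hτ)).congr_deriv (by ring)).hasDerivWithinAt
    · rw [interior_Icc] at hτ
      exact mul_nonneg (Real.exp_pos τ).le (hpos τ hτ)
  have := hmono ⟨le_rfl, hab⟩ ⟨hab, le_rfl⟩ hab
  exact nonneg_of_mul_nonneg_right (by nlinarith [Real.exp_pos a]) (Real.exp_pos b)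

structure IsRegularOn (T : ℝ) (u : ℝ → ℝ → ℝ) : Prop where
  measurable : ∀ t ∈ Icc 0 T, Measurable (u t)
  bounded : ∃ B, ∀ t ∈ Icc 0 T, ∀ x, |u t x| ≤ B
  continuousOn : ∀ x, ContinuousOn (u · x) (Icc 0 T)

theorem IsRegularOn.sub {T : ℝ} {u U : ℝ → ℝ → ℝ} (hU : IsRegularOn T U) (hu : IsRegularOn T u) :
    IsRegularOn T (U - u) where
  measurable t ht := (hU.measurable t ht).sub (hu.measurable t ht)
  bounded := by
    obtain ⟨B, hB⟩ := hU.bounded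
    obtain ⟨b, hb⟩ := hu.bounded
    exact ⟨B + b, fun t ht x => (abs_sub _ _).trans (add_le_add (hB t ht x) (hb t ht x))⟩
  continuousOn x := (hU.continuousOn x).sub (hu.continuousOn x)

/-- Picard iteration: the lower bound `v ≥ -B (K t)ⁿ / n!`, `K = 1 + r`, improves from `n` to
`n + 1`. -/
theorem IsRegularOn.nonneg_of_supersolution {μ : Measure ℝ} [IsProbabilityMeasure μ] {r T : ℝ}
    (hr : 0 ≤ r) {v v' : ℝ → ℝ → ℝ} (hv : IsRegularOn T v)
    (hderiv : ∀ t ∈ Ioo 0 T, ∀ x, HasDerivAt (v · x) (v' t x) t)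
    (hsuper : ∀ t ∈ Ioo 0 T, ∀ x, measureConv μ (v t) x - v t x + r * min (v t x) 0 ≤ v' t x)
    (h0 : ∀ x, 0 ≤ v 0 x) : ∀ t ∈ Icc 0 T, ∀ x, 0 ≤ v t x := by
  obtain ⟨B, hB⟩ := hv.bounded
  set K := 1 + r
  set ψ : ℕ → ℝ → ℝ := fun n τ => max B 0 * (K * τ) ^ n / (n ! : ℝ)
  have hψ_nonneg : ∀ n, ∀ τ ≥ 0, 0 ≤ ψ n τ := fun n τ hτ => by
    have : 0 ≤ K * τ := mul_nonneg (by positivity) hτ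
    positivity
  have hψ_deriv : ∀ n τ, HasDerivAt (ψ (n + 1)) (K * ψ n τ) τ := fun n τ => by
    refine ((((hasDerivAt_id τ).const_mul K).pow (n + 1)).const_mul _ |>.div_const _).congr_deriv ?_
    simp only [ψ, Nat.factorial_succ, id]
    push_cast
    field_simp
  have key : ∀ n : ℕ, ∀ t ∈ Icc 0 T, ∀ x, -ψ n t ≤ v t x := by
    intro n
    induction n with
    | zero =>
      intro t ht x
      simpa [ψ] using (abs_le.mp ((hB t ht x).trans (le_max_left B 0))).1
    | succ n ih =>
      intro t ht x
      have hsub : ∀ τ ∈ Ioo 0 t, τ ∈ Icc 0 T := fun τ hτ => ⟨hτ.1.le, hτ.2.le.trans ht.2⟩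
      have := nonneg_of_hasDerivAt_add_self_nonneg (f := fun τ => v τ x + ψ (n + 1) τ) ht.1
        (((hv.continuousOn x).mono (Icc_subset_Icc_right ht.2)).add
          fun τ _ => (hψ_deriv n τ).continuousAt.continuousWithinAt)
        (fun τ hτ => (hderiv τ ⟨hτ.1, hτ.2.trans_le ht.2⟩ x).add (hψ_deriv n τ))
        (fun τ hτ => ?_) (by simpa [ψ] using h0 x)
      · linarith
      have hτ' := hsub τ hτ
      have hconv := (measureConv_mem_Icc (μ := μ) (hv.measurable τ hτ')
        (fun y => ⟨ih τ hτ' y, (abs_le.mp ((hB τ hτ' y).trans (le_max_left B 0))).2⟩) x).1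
      have hmin : -ψ n τ ≤ min (v τ x) 0 :=
        le_min (ih τ hτ' x) (by linarith [hψ_nonneg n τ hτ.1.le])
      have := hsuper τ ⟨hτ.1, hτ.2.trans_le ht.2⟩ x
      nlinarith [hψ_nonneg (n + 1) τ hτ.1.le]
  intro t ht x
  refine le_of_tendsto' (f := fun n => -ψ n t) (x := atTop) ?_ fun n => key n t ht x
  simpa [ψ, mul_div_assoc] using
    ((FloorSemiring.tendsto_pow_div_factorial_atTop (K * t)).const_mul (max B 0)).neg

theorem IsRegularOn.integrable_comp_sub {μ : Measure ℝ} [IsFiniteMeasure μ] {T t : ℝ}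
    {u : ℝ → ℝ → ℝ} (hu : IsRegularOn T u) (ht : t ∈ Icc 0 T) (x : ℝ) :
    Integrable (fun y => u t (x - y)) μ :=
  let ⟨_, hB⟩ := hu.bounded
  _root_.integrable_comp_sub (hu.measurable t ht) (hB t ht) x

/-- `hF` says that `F` is nondecreasing and `r`-Lipschitz. -/
theorem IsRegularOn.le_of_subsolution_supersolution {μ : Measure ℝ} [IsProbabilityMeasure μ]
    {F : ℝ → ℝ} {r T : ℝ} (hr : 0 ≤ r) (hF : ∀ a b, r * min (a - b) 0 ≤ F a - F b)
    {u U u' U' : ℝ → ℝ → ℝ} (hu : IsRegularOn T u) (hU : IsRegularOn T U)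
    (hu' : ∀ t ∈ Ioo 0 T, ∀ x, HasDerivAt (u · x) (u' t x) t)
    (hU' : ∀ t ∈ Ioo 0 T, ∀ x, HasDerivAt (U · x) (U' t x) t)
    (hsub : ∀ t ∈ Ioo 0 T, ∀ x, u' t x ≤ measureConv μ (u t) x - u t x + F (u t x))
    (hsuper : ∀ t ∈ Ioo 0 T, ∀ x, measureConv μ (U t) x - U t x + F (U t x) ≤ U' t x)
    (h0 : ∀ x, u 0 x ≤ U 0 x) : ∀ t ∈ Icc 0 T, ∀ x, u t x ≤ U t x := by
  have hv := (hU.sub hu).nonneg_of_supersolution (μ := μ) hr (v' := U' - u')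
    (fun t ht x => (hU' t ht x).sub (hu' t ht x)) (fun t ht x => ?_)
    (fun x => sub_nonneg.mpr (h0 x))
  · exact fun t ht x => sub_nonneg.mp (hv t ht x)
  have ht' : t ∈ Icc 0 T := Ioo_subset_Icc_self ht
  have hconv := measureConv_sub (μ := μ) x (hU.integrable_comp_sub ht' x)
    (hu.integrable_comp_sub ht' x)
  simp only [Pi.sub_apply] at hconv ⊢
  linarith [hsub t ht x, hsuper t ht x, hF (U t x) (u t x)]

theorem exists_pos_measureReal_Ici {μ : Measure ℝ} [IsProbabilityMeasure μ] [μ.IsNegInvariant]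
    [NullSingletonClass μ] : ∃ s > 0, 0 < μ.real (Ici s) := by
  by_contra! h
  have hnull : ∀ n : ℕ, μ (Ici (1 / (n + 1 : ℝ))) = 0 := fun n =>
    (measureReal_eq_zero_iff).mp ((h _ Nat.one_div_pos_of_nat).antisymm measureReal_nonneg)
  have hIoi : μ (Ioi 0) = 0 := by
    refine measure_mono_null (fun x (hx : 0 < x) => ?_) (measure_iUnion_null hnull)
    obtain ⟨n, hn⟩ := exists_nat_one_div_lt hx
    exact mem_iUnion.mpr ⟨n, hn.le⟩
  have hIio : μ (Iio 0) = 0 := by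
    rw [← neg_zero, ← Set.neg_Ioi, Measure.measure_neg, hIoi]
  have huniv : μ univ = 0 :=
    measure_mono_null (fun x _ => by rcases lt_trichotomy x 0 with hx | hx | hx <;> simp [hx])
      (measure_union_null (measure_union_null hIio (measure_singleton 0)) hIoi)
  simp at huniv

def kernelMeasure (J : ℝ → ℝ) : Measure ℝ := volume.withDensity fun x => ENNReal.ofReal (J x)

section kernelMeasure

variable {J : ℝ → ℝ}

instance : NullSingletonClass (kernelMeasure J) := nullSingletonClass_withDensity _

theorem K1.integral_kernelMeasure (hJ : K1 J) (g : ℝ → ℝ) :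
    ∫ y, g y ∂kernelMeasure J = ∫ y, J y * g y := by
  rw [kernelMeasure, integral_withDensity_eq_integral_toReal_smul₀
    hJ.2.2.1.aemeasurable.ennreal_ofReal (ae_of_all _ fun _ => ENNReal.ofReal_lt_top)]
  simp [ENNReal.toReal_ofReal (hJ.1 _)]

theorem K1.isProbabilityMeasure (hJ : K1 J) : IsProbabilityMeasure (kernelMeasure J) := by
  constructor
  rw [kernelMeasure, withDensity_apply _ MeasurableSet.univ, Measure.restrict_univ,
    ← ofReal_integral_eq_lintegral_ofReal hJ.2.2.1 (ae_of_all _ hJ.1), hJ.2.2.2, ENNReal.ofReal_one]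

theorem K1.isNegInvariant (hJ : K1 J) : (kernelMeasure J).IsNegInvariant := by
  constructor
  ext s hs
  rw [Measure.neg, Measure.map_apply measurable_neg hs, kernelMeasure, withDensity_apply _ hs,
    withDensity_apply _ (measurable_neg hs)]
  have := (Measure.measurePreserving_neg (volume : Measure ℝ)).setLIntegral_comp_preimage_emb
    (MeasurableEquiv.neg ℝ).measurableEmbedding (fun x => ENNReal.ofReal (J x)) s
  simpa [hJ.2.1] using this

end kernelMeasure

section stepInit

variable {h L : ℝ}

theorem measurable_stepInit : Measurable (stepInit h L) :=
  measurable_const.indicator measurableSet_Ioo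

theorem stepInit_one_mem_Icc (x : ℝ) : stepInit 1 L x ∈ Icc 0 1 := by
  by_cases hx : x ∈ Ioo (-L) L <;> simp [stepInit, hx]

theorem stepInit_neg (x : ℝ) : stepInit h L (-x) = stepInit h L x := by
  have : -x ∈ Ioo (-L) L ↔ x ∈ Ioo (-L) L := by
    simp only [mem_Ioo]; constructor <;> rintro ⟨h₁, h₂⟩ <;> constructor <;> linarith
  by_cases hx : x ∈ Ioo (-L) L <;> simp [stepInit, hx, this]

theorem stepInit_eq_zero {x : ℝ} (hx : x ≤ -L) : stepInit h L x = 0 :=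
  indicator_of_notMem (fun hx' => hx'.1.not_ge hx) _

theorem stepInit_eq_mul (x : ℝ) : stepInit h L x = h * stepInit 1 L x := by
  by_cases hx : x ∈ Ioo (-L) L <;> simp [stepInit, hx]

end stepInit

theorem mul_min_sub_le_mul_max_sub_sub {r : ℝ} (hr : 0 ≤ r) (θ a b : ℝ) :
    r * min (a - b) 0 ≤ r * max (a - θ) 0 - r * max (b - θ) 0 := by
  rw [← mul_sub]
  refine mul_le_mul_of_nonneg_left ?_ hr
  rcases le_total a b with hab | hab
  · have : max (b - θ) 0 ≤ max (a - θ) 0 + (b - a) :=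
      max_le (by linarith [le_max_left (a - θ) 0]) (by linarith [le_max_right (a - θ) 0])
    rw [min_eq_left (by linarith)]
    linarith
  · rw [min_eq_right (by linarith), sub_nonneg]
    exact max_le_max_right 0 (by linarith)

namespace IsBddSol

variable {J f u₀ : ℝ → ℝ} {w : ℝ → ℝ → ℝ}

theorem isRegularOn (hw : IsBddSol J f u₀ w) (T : ℝ) : IsRegularOn T w where
  measurable t ht := hw.2.1 t ht.1
  bounded := let ⟨M, hM⟩ := hw.1; ⟨M, fun t ht x => hM t x ht.1⟩
  continuousOn x := (hw.2.2.1 x).mono Icc_subset_Ici_self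

theorem hasDerivAt_measureConv (hJ : K1 J) (hw : IsBddSol J f u₀ w) {t : ℝ} (ht : 0 < t)
    (x : ℝ) : HasDerivAt (w · x)
      (measureConv (kernelMeasure J) (w t) x - w t x + f (w t x)) t := by
  have := hJ.isProbabilityMeasure
  convert hw.2.2.2.2 t x ht using 2
  rw [← hJ.integral_kernelMeasure, integral_sub ((hw.isRegularOn t).integrable_comp_sub
    ⟨ht.le, le_rfl⟩ x) (integrable_const _)]
  simp [measureConv]

/-- `(θ + ε e^{r t}) S(t)` is a supersolution: since `0 ≤ S ≤ 1`, its reaction term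
`r ((θ + ε e^{r t}) S - θ)⁺` is at most `r ε e^{r t} S`, the prefactor's derivative times `S`. -/
theorem le_mul_jumpSemigroup (hJ : K1 J) {r θ ε L : ℝ} (hr : 0 ≤ r) (hθ : 0 ≤ θ)
    (hε : 0 ≤ ε) (hw : IsBddSol J (fun v => r * max (v - θ) 0) (stepInit (θ + ε) L) w) {t : ℝ}
    (ht : 0 ≤ t) (x : ℝ) :
    w t x ≤ (θ + ε * Real.exp (r * t)) * jumpSemigroup (kernelMeasure J) (stepInit 1 L) t x := by
  have := hJ.isProbabilityMeasure
  set μ := kernelMeasure J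
  set S := jumpSemigroup μ (stepInit 1 L)
  set c : ℝ → ℝ := fun τ => θ + ε * Real.exp (r * τ)
  have hc : ∀ τ, HasDerivAt c (r * (c τ - θ)) τ := fun τ =>
    ((((hasDerivAt_id τ).const_mul r).exp.const_mul ε).const_add θ).congr_deriv (by simp [c]; ring)
  have hu₀ : Measurable (stepInit 1 L) := measurable_stepInit
  have hS := hasDerivAt_jumpSemigroup (μ := μ) hu₀ stepInit_one_mem_Icc
  have hS₀₁ : ∀ {τ}, 0 ≤ τ → ∀ y, S τ y ∈ Icc 0 1 := fun hτ y =>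
    jumpSemigroup_mem_Icc hu₀ stepInit_one_mem_Icc hτ y
  have hcθ : ∀ τ, 0 ≤ c τ - θ := fun τ => by simp only [c, add_sub_cancel_left]; positivity
  refine (hw.isRegularOn t).le_of_subsolution_supersolution (μ := μ) hr
    (mul_min_sub_le_mul_max_sub_sub hr θ) (U := fun τ y => c τ * S τ y)
    (u' := fun τ y => measureConv μ (w τ) y - w τ y + r * max (w τ y - θ) 0)
    (U' := fun τ y => r * (c τ - θ) * S τ y + c τ * (measureConv μ (S τ) y - S τ y))
    ⟨fun τ _ => (measurable_jumpSemigroup hu₀ stepInit_one_mem_Icc τ).const_mul _,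
      ⟨c t, fun τ hτ y => ?_⟩,
      fun y => continuousOn_of_forall_continuousAt fun τ _ =>
        (hc τ).continuousAt.mul (hS τ y).continuousAt⟩
    (fun τ hτ y => hw.hasDerivAt_measureConv hJ hτ.1 y) (fun τ _ y => (hc τ).mul (hS τ y))
    (fun _ _ _ => le_rfl) (fun τ hτ y => ?_) (fun y => ?_) t ⟨ht, le_rfl⟩ x
  · have hcτ : c τ ≤ c t := by simp only [c]; gcongr; exact hτ.2
    rw [abs_of_nonneg (mul_nonneg (by linarith [hcθ τ]) (hS₀₁ hτ.1 y).1)]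
    calc c τ * S τ y ≤ c τ * 1 := mul_le_mul_of_nonneg_left (hS₀₁ hτ.1 y).2 (by linarith [hcθ τ])
      _ ≤ c t := by linarith
  · have hmax : r * max (c τ * S τ y - θ) 0 ≤ r * (c τ - θ) * S τ y := by
      rw [mul_assoc]
      refine mul_le_mul_of_nonneg_left (max_le ?_ (mul_nonneg (hcθ τ) (hS₀₁ hτ.1.le y).1)) hr
      nlinarith [mul_nonneg hθ (sub_nonneg.mpr (hS₀₁ hτ.1.le y).2)]
    simp only [measureConv_const_mul]
    linarith
  · simp [hw.2.2.2.1 y, stepInit_eq_mul (h := θ + ε) y, c, S, jumpSemigroup_zero]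

end IsBddSol

theorem add_mul_exp_mul_le_of_le_one_sub_exp_neg {θ ε r T S : ℝ} (hθ : 0 ≤ θ) (hε : 0 ≤ ε)
    (hS : S ≤ 1 - Real.exp (-T)) (hεT : ε * Real.exp ((r + 1) * T) ≤ θ) :
    (θ + ε * Real.exp (r * T)) * S ≤ θ := by
  have hsplit : ε * Real.exp (r * T) = ε * Real.exp ((r + 1) * T) * Real.exp (-T) := by
    rw [mul_assoc, ← Real.exp_add]; ring_nf
  have hprod : 0 ≤ ε * Real.exp (r * T) * Real.exp (-T) := by positivity
  have hle : ε * Real.exp (r * T) ≤ θ * Real.exp (-T) := by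
    rw [hsplit]; exact mul_le_mul_of_nonneg_right hεT (Real.exp_pos _).le
  calc (θ + ε * Real.exp (r * T)) * S ≤ (θ + ε * Real.exp (r * T)) * (1 - Real.exp (-T)) :=
        mul_le_mul_of_nonneg_left hS (by positivity)
    _ ≤ θ := by nlinarith

theorem mul_exp_half_log_one_div_le {ε θ : ℝ} (hε : 0 < ε) (hθ : 0 ≤ θ) (h : ε ≤ θ ^ 2) :
    ε * Real.exp (Real.log (1 / ε) / 2) ≤ θ := by
  refine (pow_le_pow_iff_left₀ (by positivity) hθ two_ne_zero).mp ?_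
  calc (ε * Real.exp (Real.log (1 / ε) / 2)) ^ 2 = ε ^ 2 * Real.exp (Real.log (1 / ε)) := by
        rw [mul_pow, ← Real.exp_nat_mul]; ring_nf
    _ = ε := by rw [Real.exp_log (by positivity)]; field_simp
    _ ≤ θ ^ 2 := h

theorem toy_asymptotic_extinction_exponential_general
    (J : ℝ → ℝ) (rp θ : ℝ)
    (hK1 : K1 J)
    (hrp : 0 < rp) (hθ : θ ∈ Set.Ioo (0:ℝ) 1) :
    ∃ Cm > 0, ∃ Ct > 0, ∃ ε₀ > 0, ∀ ε, 0 < ε → ε < ε₀ → ∀ L, 0 < L →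
      L < Cm * Real.log (1/ε) →
      ∀ w, IsBddSol J (fun v => rp * max (v - θ) 0) (stepInit (θ + ε) L) w →
        ∀ x, w (Ct * Real.log (1/ε)) x ≤ θ := by
  have := hK1.isProbabilityMeasure
  have := hK1.isNegInvariant
  obtain ⟨s, hs, hp⟩ := exists_pos_measureReal_Ici (μ := kernelMeasure J)
  set p := (kernelMeasure J).real (Ici s)
  set Ct := 1 / (2 * (rp + 1))
  have hθ₀ := hθ.1
  refine ⟨Ct * p * s / 2, by positivity, Ct, by positivity,
    min (θ ^ 2) (Real.exp (-(2 / (Ct * p)))), by positivity, ?_⟩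
  intro ε hε hεε₀ L hL hLε w hw x
  set Λ := Real.log (1 / ε)
  have hΛ : 2 / (Ct * p) ≤ Λ := by
    rw [show Λ = -Real.log ε by simp [Λ], le_neg]
    exact (Real.log_le_iff_le_exp hε).mpr (hεε₀.le.trans (min_le_right _ _))
  have hT : 0 ≤ Ct * Λ := mul_nonneg (by positivity) ((by positivity : 0 ≤ 2 / (Ct * p)).trans hΛ)
  have hLT : L + s ≤ p * s * (Ct * Λ) := by
    have := (div_le_iff₀ (by positivity)).mp hΛ
    nlinarith
  -- `(rp + 1) T = ln(1/ε) / 2`, so `ε e^{(rp + 1) T} = √ε`, which is `≤ θ` as `ε < θ²`.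
  have hεT : ε * Real.exp ((rp + 1) * (Ct * Λ)) ≤ θ := by
    rw [show (rp + 1) * (Ct * Λ) = Λ / 2 by simp only [Ct]; field_simp]
    exact mul_exp_half_log_one_div_le hε hθ₀.le (hεε₀.le.trans (min_le_left _ _))
  have hS := jumpSemigroup_le_one_sub_exp_neg measurable_stepInit stepInit_one_mem_Icc
    stepInit_neg hL.le hs (fun y hy => (stepInit_eq_zero hy).le) hLT x
  exact (hw.le_mul_jumpSemigroup hK1 hrp.le hθ₀.le hε.le hT x).trans
    (add_mul_exp_mul_le_of_le_one_sub_exp_neg hθ₀.le hε.le hS hεT)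

/-- **Corollary (Asymptotic extinction criterion for the toy problem, exponentially bounded
kernels).** Under (K1), (K2) and `∫ e^{λ₀ x} J(x) dx < ∞` for some `λ₀ > 0`, there are
constants `C⁻ > 0`, `C̃⁻ > 0` and `ε₀ > 0` such that for each `ε ∈ (0, ε₀)` and each
`0 < L < C⁻ ln(1/ε)`, the solution of `∂ₜ w = J ∗ w - w + r⁺ (w-θ)₊` starting from
`(θ+ε) 1_{(-L,L)}` is everywhere `≤ θ` at time `T = C̃⁻ ln(1/ε)`. -/
theorem toy_asymptotic_extinction_exponential
    (J : ℝ → ℝ) (rp θ lam0 : ℝ)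
    (hK1 : K1 J) (hK2 : AntitoneOn J (Set.Ioi 0))
    (hrp : 0 < rp) (hθ : θ ∈ Set.Ioo (0:ℝ) 1)
    (hlam0 : 0 < lam0)
    (hexp : Integrable (fun x => Real.exp (lam0 * x) * J x)) :
    ∃ Cm > 0, ∃ Ct > 0, ∃ ε₀ > 0, ∀ ε, 0 < ε → ε < ε₀ → ∀ L, 0 < L →
      L < Cm * Real.log (1/ε) →
      ∀ w, IsBddSol J (fun v => rp * max (v - θ) 0) (stepInit (θ + ε) L) w →
        ∀ x, w (Ct * Real.log (1/ε)) x ≤ θ :=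
  toy_asymptotic_extinction_exponential_general J rp θ hK1 hrp hθ
end
end

section
/- Let J satisfy (K1) and be exponentially bounded: there exists λ₀ > 0 with ∫_ℝ e^{λ₀ x} J(x) dx < ∞. Fix r⁻ ∈ (0,1), θ ∈ (0,1), η ∈ (θ,1) and m ∈ (0,1), and set T_ε := (1/r⁻)·ln(2(η−θ)/ε). Then there exist a constant C⁺ > 0 (depending only on r⁻ and J) and ε₀ > 0 such that for all ε ∈ (0, ε₀) and all L ≥ L_ε := (C⁺/(1−m))·ln(1/ε), the solution w of ∂_t w = J ∗ w − w + r⁻(w − θ) with initial datum w(0,x) = (θ+ε)·1_{(−L,L)}(x) satisfies min_{|x| ≤ mL} w(T_ε, x) ≥ η. -/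
open MeasureTheory Filter Set Asymptotics

noncomputable section

/-!
With `M = ∫ e^{λ₀|y|} J(y) dy` and `κ = M - 1 + r⁻`, the profile `g = min(1, e^{λ₀(|x| - L)})`
satisfies `J ∗ g ≤ M g`, so `ψ(t,x) = θ + ε e^{r⁻t} - 2 e^{κt} g(x)` is a subsolution lying below
the step datum at `t = 0`. The comparison principle, obtained by Picard iteration for
`∂ₜ z ≥ J ∗ z` after absorbing the linear part into the factor `e^{(1-r⁻)t}`, gives `w ≥ ψ`.
At `T_ε` the growing term `ε e^{r⁻T_ε}` equals `2(η - θ)`, while `L ≥ L_ε` with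
`C⁺ = (κ + r⁻)/(r⁻λ₀)` makes `2 e^{κT_ε} g(x) ≤ 2 (2(η - θ))^{κ/r⁻} ε ≤ η - θ` for small `ε`.
-/

open Real

section Comparison

variable {J : ℝ → ℝ}

lemma integrable_mul_comp_sub_of_abs_le (hJ : Integrable J) {v : ℝ → ℝ} (hv : Measurable v)
    {B : ℝ} (hB : ∀ x, |v x| ≤ B) (u : ℝ) : Integrable fun y => J y * v (u - y) :=
  hJ.mul_bdd (hv.comp (measurable_const.sub measurable_id)).aestronglyMeasurable
    (ae_of_all _ fun y => hB (u - y))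

lemma integrable_mul_sub_of_abs_le (hJ : Integrable J) {v : ℝ → ℝ} (hv : Measurable v)
    {B : ℝ} (hB : ∀ x, |v x| ≤ B) (u : ℝ) : Integrable fun y => J y * (v (u - y) - v u) := by
  simp_rw [mul_sub]
  exact (integrable_mul_comp_sub_of_abs_le hJ hv hB u).sub (hJ.mul_const _)

lemma integral_mul_sub_eq (hJ : Integrable J) (hJ1 : ∫ x, J x = 1) {v : ℝ → ℝ}
    (hv : Measurable v) {B : ℝ} (hB : ∀ x, |v x| ≤ B) (u : ℝ) :
    ∫ y, J y * (v (u - y) - v u) = (∫ y, J y * v (u - y)) - v u := by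
  simp_rw [mul_sub]
  rw [integral_sub (integrable_mul_comp_sub_of_abs_le hJ hv hB u) (hJ.mul_const _),
    integral_mul_const, hJ1, one_mul]

variable (hJ0 : ∀ x, 0 ≤ J x) (hJ : Integrable J) (hJ1 : ∫ x, J x = 1)
  {T B : ℝ} {z z' : ℝ → ℝ → ℝ}
  (hcont : ∀ u, ContinuousOn (fun t => z t u) (Icc 0 T))
  (hmeas : ∀ t ∈ Icc 0 T, Measurable (z t))
  (hbdd : ∀ t ∈ Icc 0 T, ∀ u, |z t u| ≤ B)
  (h0 : ∀ u, 0 ≤ z 0 u)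
  (hz' : ∀ t ∈ Ioo 0 T, ∀ u, HasDerivAt (fun s => z s u) (z' t u) t)

include hJ0 hJ hJ1 hcont hmeas hbdd h0 hz' in
lemma neg_pow_div_factorial_le_of_conv_le_deriv
    (hle : ∀ t ∈ Ioo 0 T, ∀ u, ∫ y, J y * z t (u - y) ≤ z' t u) (n : ℕ) :
    ∀ t ∈ Icc 0 T, ∀ u, -(B * t ^ n / n.factorial) ≤ z t u := by
  induction n with
  | zero =>
    intro t ht u
    simpa using (abs_le.1 (hbdd t ht u)).1
  | succ n ih =>
    intro t ht u
    let G s := z s u + B * s ^ (n + 1) / (n + 1).factorial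
    have hG : ∀ s ∈ Ioo 0 T, HasDerivAt G (z' s u + B * s ^ n / n.factorial) s := by
      intro s hs
      refine (hz' s hs u).add <|
        (((hasDerivAt_pow (n + 1) s).const_mul B).div_const ((n + 1).factorial : ℝ)).congr_deriv ?_
      rw [Nat.factorial_succ]
      push_cast
      field_simp
    have hG' : ∀ s ∈ Ioo 0 T, 0 ≤ z' s u + B * s ^ n / n.factorial := by
      intro s hs
      have hconv : -(B * s ^ n / n.factorial) ≤ ∫ y, J y * z s (u - y) := by
        calc -(B * s ^ n / n.factorial) = ∫ y, J y * -(B * s ^ n / n.factorial) := by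
              rw [integral_mul_const, hJ1, one_mul]
          _ ≤ ∫ y, J y * z s (u - y) :=
              integral_mono (hJ.mul_const _)
                (integrable_mul_comp_sub_of_abs_le hJ (hmeas s (Ioo_subset_Icc_self hs))
                  (hbdd s (Ioo_subset_Icc_self hs)) u)
                fun y => mul_le_mul_of_nonneg_left (ih s (Ioo_subset_Icc_self hs) (u - y)) (hJ0 y)
      linarith [hle s hs u]
    have hmono : MonotoneOn G (Icc 0 T) := by
      refine monotoneOn_of_hasDerivWithinAt_nonneg (convex_Icc 0 T)
        (f' := fun s => z' s u + B * s ^ n / n.factorial)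
        ((hcont u).add (by fun_prop)) (fun s hs => ?_) (fun s hs => ?_)
      · rw [interior_Icc] at hs ⊢
        exact (hG s hs).hasDerivWithinAt
      · rw [interior_Icc] at hs
        exact hG' s hs
    have hGt : G 0 ≤ G t := hmono (left_mem_Icc.2 (ht.1.trans ht.2)) ht ht.1
    simp only [G, zero_pow n.succ_ne_zero, mul_zero, zero_div, add_zero] at hGt
    linarith [h0 u]

include hJ0 hJ hJ1 hcont hmeas hbdd h0 hz' in
theorem nonneg_of_conv_le_deriv (hle : ∀ t ∈ Ioo 0 T, ∀ u, ∫ y, J y * z t (u - y) ≤ z' t u) :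
    ∀ t ∈ Icc 0 T, ∀ u, 0 ≤ z t u := by
  intro t ht u
  have hlim : Tendsto (fun n : ℕ => -(B * (t ^ n / n.factorial))) atTop (nhds 0) := by
    simpa using ((FloorSemiring.tendsto_pow_div_factorial_atTop t).const_mul B).neg
  refine le_of_tendsto' hlim fun n => ?_
  rw [← mul_div_assoc]
  exact neg_pow_div_factorial_le_of_conv_le_deriv hJ0 hJ hJ1 hcont hmeas hbdd h0 hz' hle n t ht u

include hJ0 hJ hJ1 hcont hmeas hbdd h0 hz' in
theorem nonneg_of_nonlocal_le_deriv {r : ℝ}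
    (hle : ∀ t ∈ Ioo 0 T, ∀ u, (∫ y, J y * (z t (u - y) - z t u)) + r * z t u ≤ z' t u) :
    ∀ t ∈ Icc 0 T, ∀ u, 0 ≤ z t u := by
  -- `e^{(1-r)t} z` satisfies `∂ₜ ≥ J ∗ ·`
  let E t := exp ((1 - r) * t)
  have hE : ∀ t, HasDerivAt E (E t * (1 - r)) t := fun t => by
    simpa using ((hasDerivAt_id t).const_mul (1 - r)).exp
  have hEbdd : ∀ t ∈ Icc 0 T, E t ≤ exp (|1 - r| * T) := fun t ht =>
    exp_le_exp.2 (mul_le_mul (le_abs_self _) ht.2 ht.1 (abs_nonneg _))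
  have hEz_bdd : ∀ t ∈ Icc 0 T, ∀ u, |E t * z t u| ≤ exp (|1 - r| * T) * B := by
    intro t ht u
    rw [abs_mul, abs_of_pos (exp_pos _)]
    exact mul_le_mul (hEbdd t ht) (hbdd t ht u) (abs_nonneg _) (exp_pos _).le
  have hEz_le : ∀ t ∈ Ioo 0 T, ∀ u,
      ∫ y, J y * (E t * z t (u - y)) ≤ E t * (1 - r) * z t u + E t * z' t u := by
    intro t ht u
    have hmeas_t := hmeas t (Ioo_subset_Icc_self ht)
    have hbdd_t := hbdd t (Ioo_subset_Icc_self ht)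
    have h := integral_mul_sub_eq hJ hJ1 hmeas_t hbdd_t u
    simp_rw [mul_left_comm (J _) (E t), integral_const_mul]
    have := mul_le_mul_of_nonneg_left (hle t ht u) (exp_pos ((1 - r) * t) : 0 < E t).le
    rw [h] at this
    linear_combination this
  have key := nonneg_of_conv_le_deriv hJ0 hJ hJ1 (z := fun t u => E t * z t u)
    (z' := fun t u => E t * (1 - r) * z t u + E t * z' t u)
    (fun u => (by fun_prop : Continuous E).continuousOn.mul (hcont u))
    (fun t ht => (hmeas t ht).const_mul _) hEz_bdd (fun u => by simpa [E] using h0 u)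
    (fun t ht u => (hE t).mul (hz' t ht u)) hEz_le
  exact fun t ht u => nonneg_of_mul_nonneg_right (key t ht u) (exp_pos _)

end Comparison

theorem le_of_isBddSol_of_subsolution {J : ℝ → ℝ} (hJ0 : ∀ x, 0 ≤ J x) (hJ : Integrable J)
    (hJ1 : ∫ x, J x = 1) {r θ T B : ℝ} {u0 : ℝ → ℝ} {w ψ ψ' : ℝ → ℝ → ℝ}
    (hw : IsBddSol J (fun v => r * (v - θ)) u0 w)
    (hψcont : ∀ u, ContinuousOn (fun t => ψ t u) (Icc 0 T))
    (hψmeas : ∀ t ∈ Icc 0 T, Measurable (ψ t))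
    (hψbdd : ∀ t ∈ Icc 0 T, ∀ u, |ψ t u| ≤ B)
    (hψ0 : ∀ u, ψ 0 u ≤ u0 u)
    (hψ' : ∀ t ∈ Ioo 0 T, ∀ u, HasDerivAt (fun s => ψ s u) (ψ' t u) t)
    (hsub : ∀ t ∈ Ioo 0 T, ∀ u,
      ψ' t u ≤ (∫ y, J y * (ψ t (u - y) - ψ t u)) + r * (ψ t u - θ)) :
    ∀ t ∈ Icc 0 T, ∀ u, ψ t u ≤ w t u := by
  obtain ⟨⟨M, hM⟩, hmeas, hcont, hinit, hderiv⟩ := hw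
  have hdiff := nonneg_of_nonlocal_le_deriv hJ0 hJ hJ1 (z := fun t u => w t u - ψ t u)
    (B := M + B) (r := r)
    (fun u => ((hcont u).mono Icc_subset_Ici_self).sub (hψcont u))
    (fun t ht => (hmeas t ht.1).sub (hψmeas t ht))
    (fun t ht u => (abs_sub _ _).trans (add_le_add (hM t u ht.1) (hψbdd t ht u)))
    (fun u => by simpa [hinit u] using hψ0 u)
    (fun t ht u => (hderiv t u ht.1).sub (hψ' t ht u)) ?_
  · exact fun t ht u => sub_nonneg.1 (hdiff t ht u)
  intro t ht u
  have hw_int := integrable_mul_sub_of_abs_le hJ (hmeas t ht.1.le) (hM t · ht.1.le) u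
  have hψ_int := integrable_mul_sub_of_abs_le hJ (hψmeas t (Ioo_subset_Icc_self ht))
    (hψbdd t (Ioo_subset_Icc_self ht)) u
  have hsplit : ∫ y, J y * ((w t (u - y) - ψ t (u - y)) - (w t u - ψ t u)) =
      (∫ y, J y * (w t (u - y) - w t u)) - ∫ y, J y * (ψ t (u - y) - ψ t u) := by
    rw [← integral_sub hw_int hψ_int]
    congr 1 with y
    ring
  rw [hsplit]
  linarith [hsub t ht u]

def expProfile (lam L u : ℝ) : ℝ := min 1 (exp (lam * (|u| - L)))

section ExpProfile

variable {lam L : ℝ}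

lemma expProfile_nonneg (u : ℝ) : 0 ≤ expProfile lam L u :=
  le_min zero_le_one (exp_pos _).le

lemma abs_expProfile_le_one (u : ℝ) : |expProfile lam L u| ≤ 1 := by
  rw [abs_of_nonneg (expProfile_nonneg u)]
  exact min_le_left _ _

@[fun_prop]
lemma continuous_expProfile : Continuous (expProfile lam L) := by
  unfold expProfile
  fun_prop

lemma expProfile_eq_one (hlam : 0 ≤ lam) {u : ℝ} (hu : L ≤ |u|) : expProfile lam L u = 1 :=
  min_eq_left (one_le_exp (mul_nonneg hlam (sub_nonneg.2 hu)))

lemma expProfile_le_exp (u : ℝ) : expProfile lam L u ≤ exp (lam * (|u| - L)) :=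
  min_le_right _ _

lemma expProfile_sub_le (hlam : 0 ≤ lam) (u y : ℝ) :
    expProfile lam L (u - y) ≤ exp (lam * |y|) * expProfile lam L u := by
  have hy : 1 ≤ exp (lam * |y|) := one_le_exp (by positivity)
  rw [expProfile, expProfile, mul_min_of_nonneg _ _ (zero_le_one.trans hy), mul_one, ← exp_add]
  refine min_le_min hy (exp_le_exp.2 ?_)
  nlinarith [abs_sub u y]

lemma integral_mul_expProfile_le {J : ℝ → ℝ} (hJ0 : ∀ x, 0 ≤ J x) (hJ : Integrable J)
    (hJexp : Integrable fun y => exp (lam * |y|) * J y) (hlam : 0 ≤ lam) (u : ℝ) :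
    ∫ y, J y * expProfile lam L (u - y) ≤
      (∫ y, exp (lam * |y|) * J y) * expProfile lam L u := by
  rw [← integral_mul_const]
  refine integral_mono
    (integrable_mul_comp_sub_of_abs_le hJ continuous_expProfile.measurable abs_expProfile_le_one u)
    (hJexp.mul_const _) fun y => ?_
  calc J y * expProfile lam L (u - y) ≤ J y * (exp (lam * |y|) * expProfile lam L u) :=
        mul_le_mul_of_nonneg_left (expProfile_sub_le hlam u y) (hJ0 y)
    _ = exp (lam * |y|) * J y * expProfile lam L u := by ring

end ExpProfile

section ExponentialMoment

variable {J : ℝ → ℝ} {lam : ℝ}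

lemma integrable_exp_mul_abs_mul (hJ0 : ∀ x, 0 ≤ J x) (hJe : ∀ x, J (-x) = J x)
    (hJ : Integrable J) (hexp : Integrable fun x => exp (lam * x) * J x) :
    Integrable fun y => exp (lam * |y|) * J y := by
  have hneg : Integrable fun y => exp (lam * -y) * J y := by
    simpa [hJe] using hexp.comp_neg
  refine (hexp.add hneg).mono' (by fun_prop) (ae_of_all _ fun y => ?_)
  rw [Real.norm_eq_abs, abs_of_nonneg (mul_nonneg (exp_pos _).le (hJ0 y))]
  have h₁ := mul_nonneg (exp_pos (lam * y)).le (hJ0 y)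
  have h₂ := mul_nonneg (exp_pos (lam * -y)).le (hJ0 y)
  rcases abs_cases y with ⟨hy, _⟩ | ⟨hy, _⟩ <;> simp only [hy, Pi.add_apply] <;> linarith

lemma one_le_integral_exp_mul_abs_mul (hJ0 : ∀ x, 0 ≤ J x) (hJ : Integrable J)
    (hJ1 : ∫ x, J x = 1) (hJexp : Integrable fun y => exp (lam * |y|) * J y) (hlam : 0 ≤ lam) :
    1 ≤ ∫ y, exp (lam * |y|) * J y := by
  rw [← hJ1]
  exact integral_mono hJ hJexp fun y =>
    le_mul_of_one_le_left (hJ0 y) (one_le_exp (by positivity))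

end ExponentialMoment

def expSubsolution (θ ε r κ : ℝ) (g : ℝ → ℝ) (t u : ℝ) : ℝ :=
  θ + ε * exp (r * t) - 2 * exp (κ * t) * g u

section Subsolution

variable {θ ε r κ : ℝ} {g : ℝ → ℝ}

lemma hasDerivAt_expSubsolution (t u : ℝ) :
    HasDerivAt (fun s => expSubsolution θ ε r κ g s u)
      (ε * (exp (r * t) * r) - 2 * (exp (κ * t) * κ) * g u) t := by
  have hexp : ∀ c : ℝ, HasDerivAt (fun s => exp (c * s)) (exp (c * t) * c) t := fun c => by
    simpa using ((hasDerivAt_id t).const_mul c).exp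
  exact (((hexp r).const_mul ε).const_add θ).sub (((hexp κ).const_mul 2).mul_const (g u))

lemma expSubsolution_deriv_le {J : ℝ → ℝ} (hJ : Integrable J) (hJ1 : ∫ x, J x = 1) {M : ℝ}
    (hg : Measurable g) (hg1 : ∀ u, |g u| ≤ 1)
    (hconv : ∀ u, ∫ y, J y * g (u - y) ≤ M * g u) (hκ : κ = M - 1 + r) (t u : ℝ) :
    ε * (exp (r * t) * r) - 2 * (exp (κ * t) * κ) * g u ≤
      (∫ y, J y * (expSubsolution θ ε r κ g t (u - y) - expSubsolution θ ε r κ g t u)) +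
        r * (expSubsolution θ ε r κ g t u - θ) := by
  have hint : ∫ y, J y * (expSubsolution θ ε r κ g t (u - y) - expSubsolution θ ε r κ g t u) =
      -(2 * exp (κ * t)) * ((∫ y, J y * g (u - y)) - g u) := by
    rw [← integral_mul_sub_eq hJ hJ1 hg hg1, ← integral_const_mul]
    congr 1 with y
    simp only [expSubsolution]
    ring
  have hE : 0 ≤ 2 * exp (κ * t) := by positivity
  have := mul_le_mul_of_nonneg_left (hconv u) hE
  rw [hint, expSubsolution]
  subst hκ
  linear_combination this

end Subsolution

theorem expSubsolution_le_of_isBddSol {J : ℝ → ℝ} (hJ0 : ∀ x, 0 ≤ J x) (hJ : Integrable J)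
    (hJ1 : ∫ x, J x = 1) {θ ε r lam L : ℝ} (hJexp : Integrable fun y => exp (lam * |y|) * J y)
    (hlam : 0 ≤ lam) (hθε : θ + ε ≤ 2) {κ : ℝ} (hκ : κ = (∫ y, exp (lam * |y|) * J y) - 1 + r)
    {w : ℝ → ℝ → ℝ}
    (hw : IsBddSol J (fun v => r * (v - θ)) (stepInit (θ + ε) L) w) {t : ℝ} (ht : 0 ≤ t)
    (u : ℝ) :
    expSubsolution θ ε r κ (expProfile lam L) t u ≤ w t u := by
  obtain ⟨Ca, hCa⟩ := (isCompact_Icc (a := 0) (b := t)).exists_bound_of_continuousOn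
    (f := fun s => θ + ε * exp (r * s)) (by fun_prop)
  obtain ⟨Cb, hCb⟩ := (isCompact_Icc (a := 0) (b := t)).exists_bound_of_continuousOn
    (f := fun s => 2 * exp (κ * s)) (by fun_prop)
  have hbdd : ∀ s ∈ Icc 0 t, ∀ v, |expSubsolution θ ε r κ (expProfile lam L) s v| ≤ Ca + Cb := by
    intro s hs v
    have ha := hCa s hs
    have hb := hCb s hs
    rw [Real.norm_eq_abs] at ha hb
    calc |expSubsolution θ ε r κ (expProfile lam L) s v|
        ≤ |θ + ε * exp (r * s)| + |2 * exp (κ * s)| * |expProfile lam L v| := by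
          rw [expSubsolution, ← abs_mul]
          exact abs_sub _ _
      _ ≤ Ca + Cb * 1 := add_le_add ha
          (mul_le_mul hb (abs_expProfile_le_one v) (abs_nonneg _) ((abs_nonneg _).trans hb))
      _ = Ca + Cb := by rw [mul_one]
  have hinit : ∀ v, expSubsolution θ ε r κ (expProfile lam L) 0 v ≤ stepInit (θ + ε) L v := by
    intro v
    simp only [expSubsolution, stepInit, mul_zero, exp_zero, mul_one]
    by_cases hv : v ∈ Ioo (-L) L
    · rw [indicator_of_mem hv]
      linarith [expProfile_nonneg (lam := lam) (L := L) v]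
    · have hLv : L ≤ |v| := by
        rw [le_abs']
        simp only [mem_Ioo, not_and_or, not_lt] at hv
        exact hv
      rw [indicator_of_notMem hv, expProfile_eq_one hlam hLv]
      linarith
  have hconv := integral_mul_expProfile_le hJ0 hJ hJexp hlam (L := L)
  exact le_of_isBddSol_of_subsolution hJ0 hJ hJ1 hw
    (fun v => by unfold expSubsolution; fun_prop)
    (fun s _ => by unfold expSubsolution; fun_prop) hbdd hinit
    (fun s _ v => hasDerivAt_expSubsolution s v)
    (fun s _ v => expSubsolution_deriv_le hJ hJ1 continuous_expProfile.measurable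
      abs_expProfile_le_one hconv hκ s v) t ⟨ht, le_rfl⟩ u

lemma exp_mul_expProfile_le {r ε τ lam m L κ x : ℝ} (hr : 0 < r) (hε : 0 < ε) (hτ : 0 < τ)
    (hlam : 0 < lam) (hm : m < 1) (hx : |x| ≤ m * L)
    (hL : (κ + r) / (r * lam) / (1 - m) * log (1 / ε) ≤ L) :
    exp (κ * (1 / r * log (τ / ε))) * expProfile lam L x ≤ τ ^ (κ / r) * ε := by
  have hprof : expProfile lam L x ≤ exp (-(lam * (1 - m) * L)) :=
    (expProfile_le_exp x).trans (exp_le_exp.2 (by nlinarith))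
  have hL' : (κ / r + 1) * -log ε ≤ lam * (1 - m) * L := by
    have heq : lam * (1 - m) * ((κ + r) / (r * lam) / (1 - m) * log (1 / ε)) =
        (κ / r + 1) * -log ε := by
      have : 1 - m ≠ 0 := by linarith
      rw [one_div, log_inv]
      field_simp
    linarith [mul_le_mul_of_nonneg_left hL (mul_nonneg hlam.le (sub_nonneg.2 hm.le))]
  calc exp (κ * (1 / r * log (τ / ε))) * expProfile lam L x
      ≤ exp (κ * (1 / r * log (τ / ε))) * exp (-(lam * (1 - m) * L)) := by gcongr
    _ ≤ exp (κ / r * log τ + log ε) := by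
      rw [← exp_add, log_div hτ.ne' hε.ne']
      refine exp_le_exp.2 ?_
      have : κ * (1 / r * (log τ - log ε)) = κ / r * log τ - κ / r * log ε := by ring
      linarith
    _ = τ ^ (κ / r) * ε := by rw [exp_add, exp_log hε, rpow_def_of_pos hτ, mul_comm (log τ)]

theorem toy_asymptotic_nonextinction_exponential_general
    (J : ℝ → ℝ) (rm θ η m lam0 : ℝ)
    (hK1 : K1 J)
    (hlam0 : 0 < lam0)
    (hexp : Integrable (fun x => Real.exp (lam0 * x) * J x))
    (hrm : 0 < rm)
    (hη : η ∈ Set.Ioo θ 1) (hm : m ∈ Set.Ioo (0:ℝ) 1) :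
    ∃ Cp > 0, ∃ ε₀ > 0, ∀ ε, 0 < ε → ε < ε₀ → ∀ L,
      (Cp / (1 - m)) * Real.log (1/ε) ≤ L →
      ∀ w, IsBddSol J (fun v => rm * (v - θ)) (stepInit (θ + ε) L) w →
        ∀ x, |x| ≤ m * L → η ≤ w ((1/rm) * Real.log (2*(η-θ)/ε)) x := by
  obtain ⟨hJ0, hJe, hJ, hJ1⟩ := hK1
  have hJexp := integrable_exp_mul_abs_mul hJ0 hJe hJ hexp
  have hM := one_le_integral_exp_mul_abs_mul hJ0 hJ hJ1 hJexp hlam0.le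
  set κ := (∫ y, exp (lam0 * |y|) * J y) - 1 + rm
  have hηθ : 0 < η - θ := sub_pos.2 hη.1
  have hτκ : 0 < (2 * (η - θ)) ^ (κ / rm) := rpow_pos_of_pos (by positivity) _
  refine ⟨(κ + rm) / (rm * lam0), div_pos (by linarith) (by positivity),
    min (η - θ) ((η - θ) / (2 * (2 * (η - θ)) ^ (κ / rm))), by positivity, ?_⟩
  intro ε hε hεε₀ L hL w hw x hx
  have hε₁ : ε < η - θ := hεε₀.trans_le (min_le_left _ _)
  have hε₂ : 2 * ((2 * (η - θ)) ^ (κ / rm) * ε) < η - θ := by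
    have := hεε₀.trans_le (min_le_right _ _)
    rw [lt_div_iff₀ (by positivity)] at this
    linarith
  have hT : 0 ≤ 1 / rm * log (2 * (η - θ) / ε) :=
    mul_nonneg (by positivity) (log_nonneg ((one_le_div hε).2 (by linarith)))
  have hsub := expSubsolution_le_of_isBddSol hJ0 hJ hJ1 hJexp hlam0.le
    (by linarith [hη.2]) rfl hw hT x
  have hprof := exp_mul_expProfile_le (τ := 2 * (η - θ)) hrm hε (by positivity) hlam0 hm.2 hx hL
  have hgrowth : ε * exp (rm * (1 / rm * log (2 * (η - θ) / ε))) = 2 * (η - θ) := by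
    rw [← mul_assoc, mul_one_div_cancel hrm.ne', one_mul, exp_log (by positivity)]
    field_simp
  rw [expSubsolution, hgrowth] at hsub
  linarith

/-- **Corollary (Asymptotic non-extinction criterion, exponentially bounded kernels).**
Under (K1), `∫ e^{λ₀ x} J(x) dx < ∞` for some `λ₀ > 0`, and `r⁻ ∈ (0,1)`, there are
`C⁺ > 0` and `ε₀ > 0` such that for all `ε ∈ (0, ε₀)` and all
`L ≥ L_ε = (C⁺/(1-m)) ln(1/ε)`, the solution of `∂ₜ w = J ∗ w - w + r⁻(w-θ)` starting from
`(θ+ε) 1_{(-L,L)}` satisfies `w(T_ε,x) ≥ η` for all `|x| ≤ mL`, where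
`T_ε = (1/r⁻) ln(2(η-θ)/ε)`. -/
theorem toy_asymptotic_nonextinction_exponential
    (J : ℝ → ℝ) (rm θ η m lam0 : ℝ)
    (hK1 : K1 J)
    (hlam0 : 0 < lam0)
    (hexp : Integrable (fun x => Real.exp (lam0 * x) * J x))
    (hrm : 0 < rm) (hrm1 : rm < 1) (hθ : θ ∈ Set.Ioo (0:ℝ) 1)
    (hη : η ∈ Set.Ioo θ 1) (hm : m ∈ Set.Ioo (0:ℝ) 1) :
    ∃ Cp > 0, ∃ ε₀ > 0, ∀ ε, 0 < ε → ε < ε₀ → ∀ L,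
      (Cp / (1 - m)) * Real.log (1/ε) ≤ L →
      ∀ w, IsBddSol J (fun v => rm * (v - θ)) (stepInit (θ + ε) L) w →
        ∀ x, |x| ≤ m * L → η ≤ w ((1/rm) * Real.log (2*(η-θ)/ε)) x :=
  toy_asymptotic_nonextinction_exponential_general J rm θ η m lam0 hK1 hlam0 hexp hrm hη hm
end
end
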